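/- arXiv:1810.06653 — 9 statements merged into one kernel-verified Lean document; each statement's English description precedes it below -/
import Mathlib

section
/- Let R ∈ ℝ^{n×n} be row-stochastic with positive diagonal entries and let C ∈ ℝ^{n×n} be column-stochastic with positive diagonal entries. Assume the induced digraph 𝒢_R contains a spanning tree, the induced digraph 𝒢_{Cᵀ} contains a spanning tree, and ℛ_R ∩ ℛ_{Cᵀ} ≠ ∅. Then: (i) there exists exactly one nonnegative vector u ∈ ℝⁿ with uᵀR = uᵀ and ∑_i u_i = n; (ii) there exists exactly one nonnegative vector v ∈ ℝⁿ with Cv = v and ∑_i v_i = n; (iii) u_i > 0 if and only if i ∈ ℛ_R, and v_j > 0 if and only if j ∈ ℛ_{Cᵀ}; (iv) uᵀv > 0. -/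
/-!
A nonnegative nonzero left fixed vector of a row-stochastic `P` exists because `1` is an
eigenvalue of `P` and `|w|` is fixed whenever `w` is: it is subinvariant with the same total
mass. Positivity of a nonnegative fixed vector propagates backwards along edges, so every root
carries mass. Conversely the roots form a closed class, so by mass balance a non-root entered by
an edge from a root carries no mass; zero mass propagates forwards along edges, and every vertex
is reached from a root, so no non-root carries mass. For uniqueness, a fixed `w` with
`∑ wᵢ = 0` and, say, `w r ≥ 0` at a root `r` makes `|w| - w` a nonnegative fixed vector
vanishing at a root, hence zero, so `w ≥ 0` and `w = 0`. The column-stochastic `C` is handled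
through `Cᵀ`, and a common root gives `uᵀv > 0`.
-/

open Matrix

/-- The set of roots of the digraph induced by a nonnegative matrix `M`, where there is an
edge from `j` to `i` iff `M i j > 0`.  A root is a vertex with a directed path to every
other vertex; `𝒢_M` contains a spanning tree iff this set is nonempty. -/
def rootSet {n : ℕ} (M : Matrix (Fin n) (Fin n) ℝ) : Set (Fin n) :=
  {r | ∀ i, Relation.ReflTransGen (fun a b => 0 < M b a) r i}

namespace Matrix

section Stochastic

variable {ι : Type*} [Fintype ι] {P : Matrix ι ι ℝ}

theorem sum_vecMul_of_sum_row_eq_one (hrow : ∀ i, ∑ j, P i j = 1) (u : ι → ℝ) :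
    ∑ j, (u ᵥ* P) j = ∑ i, u i := by
  simp only [vecMul, dotProduct]
  rw [Finset.sum_comm]
  simp [← Finset.mul_sum, hrow]

theorem mul_le_of_vecMul_eq_self (hnn : ∀ i j, 0 ≤ P i j) {u : ι → ℝ} (hu : ∀ i, 0 ≤ u i)
    (hfix : u ᵥ* P = u) (i j : ι) : u i * P i j ≤ u j := by
  rw [← congrFun hfix j]
  exact Finset.single_le_sum (f := fun k => u k * P k j)
    (fun k _ => mul_nonneg (hu k) (hnn k j)) (Finset.mem_univ i)

theorem pos_of_reflTransGen (hnn : ∀ i j, 0 ≤ P i j) {u : ι → ℝ} (hu : ∀ i, 0 ≤ u i)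
    (hfix : u ᵥ* P = u) {a b : ι} (hab : Relation.ReflTransGen (fun a b => 0 < P b a) a b)
    (hb : 0 < u b) : 0 < u a := by
  induction hab with
  | refl => exact hb
  | @tail b c _ hbc ih =>
    exact ih ((mul_pos hb hbc).trans_le (mul_le_of_vecMul_eq_self hnn hu hfix c b))

theorem abs_vecMul_eq_self (hnn : ∀ i j, 0 ≤ P i j) (hrow : ∀ i, ∑ j, P i j = 1)
    {w : ι → ℝ} (hfix : w ᵥ* P = w) : |w| ᵥ* P = |w| := by
  have hle : ∀ j ∈ Finset.univ, |w| j ≤ (|w| ᵥ* P) j := fun j _ => by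
    conv_lhs => rw [Pi.abs_apply, ← hfix]
    calc |∑ i, w i * P i j| ≤ ∑ i, |w i * P i j| := Finset.abs_sum_le_sum_abs _ _
      _ = (|w| ᵥ* P) j := Finset.sum_congr rfl fun i _ => by
        rw [abs_mul, abs_of_nonneg (hnn i j), Pi.abs_apply]
  funext j
  exact ((Finset.sum_eq_sum_iff_of_le hle).mp
    (sum_vecMul_of_sum_row_eq_one hrow _).symm j (Finset.mem_univ j)).symm

theorem exists_nonneg_vecMul_eq_self [DecidableEq ι] [Nonempty ι] (hnn : ∀ i j, 0 ≤ P i j)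
    (hrow : ∀ i, ∑ j, P i j = 1) : ∃ u : ι → ℝ, (∀ i, 0 ≤ u i) ∧ u ≠ 0 ∧ u ᵥ* P = u := by
  have hone : (P - 1) *ᵥ (fun _ => 1) = 0 := by
    rw [sub_mulVec, one_mulVec, sub_eq_zero]
    funext i
    simp [mulVec, dotProduct, hrow i]
  have hdet : (P - 1).det = 0 :=
    exists_mulVec_eq_zero_iff.mp
      ⟨_, fun h => one_ne_zero (congrFun h (Classical.arbitrary ι)), hone⟩
  obtain ⟨w, hw0, hw⟩ := exists_vecMul_eq_zero_iff.mpr hdet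
  have hfix : w ᵥ* P = w := by
    rwa [vecMul_sub, vecMul_one, sub_eq_zero] at hw
  refine ⟨|w|, fun i => abs_nonneg (w i), fun h => hw0 ?_, abs_vecMul_eq_self hnn hrow hfix⟩
  exact funext fun i => abs_eq_zero.mp (congrFun h i)

/-- Mass balance: the rows of the closed class `s` already sum to one inside `s`, so no mass can
flow into `s` from outside. -/
theorem eq_zero_of_pos_of_closed [DecidableEq ι] (hnn : ∀ i j, 0 ≤ P i j)
    (hrow : ∀ i, ∑ j, P i j = 1) {u : ι → ℝ} (hu : ∀ i, 0 ≤ u i) (hfix : u ᵥ* P = u)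
    {s : Finset ι} (hs : ∀ i ∈ s, ∀ j ∉ s, P i j = 0) {i j : ι} (hi : i ∉ s) (hj : j ∈ s)
    (hij : 0 < P i j) : u i = 0 := by
  set f : ι → ℝ := fun k => u k * ∑ l ∈ s, P k l
  have hrow_s : ∀ k ∈ s, ∑ l ∈ s, P k l = 1 := fun k hk => by
    rw [← hrow k]
    exact Finset.sum_subset (Finset.subset_univ s) fun l _ hl => hs k hk l hl
  have hmass : ∑ k ∈ s, u k = ∑ k, f k := by
    calc ∑ k ∈ s, u k = ∑ l ∈ s, ∑ k, u k * P k l :=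
          Finset.sum_congr rfl fun l _ => (congrFun hfix l).symm
      _ = ∑ k, f k := by rw [Finset.sum_comm]; simp only [f, Finset.mul_sum]
  have hout : ∑ k ∈ sᶜ, f k = 0 := by
    have : ∑ k ∈ s, f k = ∑ k ∈ s, u k :=
      Finset.sum_congr rfl fun k hk => by simp only [f, hrow_s k hk, mul_one]
    linarith [Finset.sum_add_sum_compl s f]
  have hfi : f i = 0 := (Finset.sum_eq_zero_iff_of_nonneg fun k _ =>
    mul_nonneg (hu k) (Finset.sum_nonneg fun l _ => hnn k l)).mp hout i (Finset.mem_compl.mpr hi)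
  have hrow_pos : 0 < ∑ l ∈ s, P i l :=
    hij.trans_le (Finset.single_le_sum (fun l _ => hnn i l) hj)
  exact (mul_eq_zero.mp hfi).resolve_right hrow_pos.ne'

end Stochastic

end Matrix

section RootSet

variable {n : ℕ} {P : Matrix (Fin n) (Fin n) ℝ}

theorem mem_rootSet_of_pos {r j : Fin n} (hr : r ∈ rootSet P) (h : 0 < P r j) :
    j ∈ rootSet P :=
  fun i => (Relation.ReflTransGen.single (r := fun a b => 0 < P b a) h).trans (hr i)

theorem pos_of_mem_rootSet (hnn : ∀ i j, 0 ≤ P i j) {u : Fin n → ℝ} (hu : ∀ i, 0 ≤ u i)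
    (hfix : u ᵥ* P = u) {r i : Fin n} (hr : r ∈ rootSet P) (hi : 0 < u i) : 0 < u r :=
  pos_of_reflTransGen hnn hu hfix (hr i) hi

theorem eq_zero_of_vecMul_eq_self_of_mem_rootSet (hnn : ∀ i j, 0 ≤ P i j) {u : Fin n → ℝ}
    (hu : ∀ i, 0 ≤ u i) (hfix : u ᵥ* P = u) {r : Fin n} (hr : r ∈ rootSet P) (h0 : u r = 0) :
    u = 0 :=
  funext fun i => le_antisymm
    (not_lt.mp fun hi => (pos_of_mem_rootSet hnn hu hfix hr hi).ne' h0) (hu i)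

theorem mem_rootSet_of_pos_of_vecMul_eq_self (hnn : ∀ i j, 0 ≤ P i j)
    (hrow : ∀ i, ∑ j, P i j = 1) (hroot : (rootSet P).Nonempty) {u : Fin n → ℝ}
    (hu : ∀ i, 0 ≤ u i) (hfix : u ᵥ* P = u) {i : Fin n} (hi : 0 < u i) : i ∈ rootSet P := by
  classical
  obtain ⟨r, hr⟩ := hroot
  let s := Finset.univ.filter (· ∈ rootSet P)
  have hs : ∀ a ∈ s, ∀ b ∉ s, P a b = 0 := fun a ha b hb =>
    le_antisymm (not_lt.mp fun h => hb (by
      simp only [s, Finset.mem_filter, Finset.mem_univ, true_and] at ha ⊢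
      exact mem_rootSet_of_pos ha h)) (hnn a b)
  have hreach : ∀ x, Relation.ReflTransGen (fun a b => 0 < P b a) r x →
      x ∈ rootSet P ∨ u x = 0 := by
    intro x hx
    induction hx with
    | refl => exact Or.inl hr
    | @tail b c _ hbc ih =>
      by_cases hc : c ∈ rootSet P
      · exact Or.inl hc
      refine Or.inr ?_
      rcases ih with hb | hb
      · exact eq_zero_of_pos_of_closed hnn hrow hu hfix hs (by simpa [s] using hc)
          (by simpa [s] using hb) hbc
      · exact le_antisymm (not_lt.mp fun h => ((mul_pos h hbc).trans_le
          (mul_le_of_vecMul_eq_self hnn hu hfix c b)).ne' hb) (hu c)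
  exact (hreach i (hr i)).resolve_right hi.ne'

theorem eq_zero_of_vecMul_eq_self_of_sum_eq_zero (hnn : ∀ i j, 0 ≤ P i j)
    (hrow : ∀ i, ∑ j, P i j = 1) (hroot : (rootSet P).Nonempty) {w : Fin n → ℝ}
    (hfix : w ᵥ* P = w) (hsum : ∑ i, w i = 0) : w = 0 := by
  obtain ⟨r, hr⟩ := hroot
  suffices h : ∀ w : Fin n → ℝ, w ᵥ* P = w → ∑ i, w i = 0 → 0 ≤ w r → w = 0 by
    rcases le_total 0 (w r) with h' | h'
    · exact h w hfix hsum h'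
    · exact neg_eq_zero.mp (h (-w) (by rw [neg_vecMul, hfix]) (by simp [hsum]) (by simpa using h'))
  intro w hfix hsum hwr
  have hgap : |w| - w = 0 :=
    eq_zero_of_vecMul_eq_self_of_mem_rootSet hnn (fun i => by simp [le_abs_self])
      (by rw [sub_vecMul, abs_vecMul_eq_self hnn hrow hfix, hfix]) hr
      (by simp [abs_of_nonneg hwr])
  have hw : ∀ i, 0 ≤ w i := fun i => abs_eq_self.mp (sub_eq_zero.mp (congrFun hgap i))
  exact funext fun i =>
    (Finset.sum_eq_zero_iff_of_nonneg fun i _ => hw i).mp hsum i (Finset.mem_univ i)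

def IsPerronVector (P : Matrix (Fin n) (Fin n) ℝ) (u : Fin n → ℝ) : Prop :=
  (∀ i, 0 ≤ u i) ∧ u ᵥ* P = u ∧ ∑ i, u i = n

theorem existsUnique_isPerronVector (hnn : ∀ i j, 0 ≤ P i j) (hrow : ∀ i, ∑ j, P i j = 1)
    (hroot : (rootSet P).Nonempty) : ∃! u, IsPerronVector P u := by
  have : Nonempty (Fin n) := ⟨hroot.some⟩
  obtain ⟨u, hu, hu0, hfix⟩ := exists_nonneg_vecMul_eq_self hnn hrow
  obtain ⟨i, hi⟩ := Function.ne_iff.mp hu0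
  have hsum : 0 < ∑ i, u i :=
    Finset.sum_pos' (fun i _ => hu i) ⟨i, Finset.mem_univ i, (hu i).lt_of_ne' hi⟩
  refine ⟨(n / ∑ i, u i) • u, ⟨fun i => ?_, by rw [smul_vecMul, hfix], ?_⟩, fun v hv => ?_⟩
  · exact mul_nonneg (div_nonneg n.cast_nonneg hsum.le) (hu i)
  · simp only [Pi.smul_apply, smul_eq_mul, ← Finset.mul_sum, div_mul_cancel₀ _ hsum.ne']
  · refine sub_eq_zero.mp (eq_zero_of_vecMul_eq_self_of_sum_eq_zero hnn hrow hroot ?_ ?_)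
    · rw [sub_vecMul, smul_vecMul, hv.2.1, hfix]
    · simp only [Pi.sub_apply, Pi.smul_apply, smul_eq_mul, Finset.sum_sub_distrib,
        ← Finset.mul_sum, hv.2.2, div_mul_cancel₀ _ hsum.ne', sub_self]

theorem IsPerronVector.pos_iff_mem_rootSet (hnn : ∀ i j, 0 ≤ P i j)
    (hrow : ∀ i, ∑ j, P i j = 1) (hroot : (rootSet P).Nonempty) {u : Fin n → ℝ}
    (hu : IsPerronVector P u) (i : Fin n) : 0 < u i ↔ i ∈ rootSet P := by
  refine ⟨mem_rootSet_of_pos_of_vecMul_eq_self hnn hrow hroot hu.1 hu.2.1, fun hi => ?_⟩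
  obtain ⟨j, hj⟩ : ∃ j, 0 < u j := by
    by_contra! h
    have hn : (0 : ℝ) < n := Nat.cast_pos.mpr (Fin.pos i)
    linarith [hu.2.2 ▸ Finset.sum_nonpos fun j (_ : j ∈ Finset.univ) => h j]
  exact pos_of_mem_rootSet hnn hu.1 hu.2.1 hi hj

end RootSet

theorem perron_vectors_push_pull_general {n : ℕ}
    (R C : Matrix (Fin n) (Fin n) ℝ)
    (hRnonneg : ∀ i j, 0 ≤ R i j) (hRrow : ∀ i, ∑ j, R i j = 1)
    (hCnonneg : ∀ i j, 0 ≤ C i j) (hCcol : ∀ j, ∑ i, C i j = 1)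
    (hcommon : (rootSet R ∩ rootSet Cᵀ).Nonempty) :
    (∃! u : Fin n → ℝ, (∀ i, 0 ≤ u i) ∧ Matrix.vecMul u R = u ∧ ∑ i, u i = n) ∧
    (∃! v : Fin n → ℝ, (∀ i, 0 ≤ v i) ∧ C.mulVec v = v ∧ ∑ i, v i = n) ∧
    (∀ u v : Fin n → ℝ,
      ((∀ i, 0 ≤ u i) ∧ Matrix.vecMul u R = u ∧ ∑ i, u i = n) →
      ((∀ i, 0 ≤ v i) ∧ C.mulVec v = v ∧ ∑ i, v i = n) →
      (∀ i, 0 < u i ↔ i ∈ rootSet R) ∧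
      (∀ j, 0 < v j ↔ j ∈ rootSet Cᵀ) ∧
      0 < u ⬝ᵥ v) := by
  obtain ⟨r, hrR, hrC⟩ := hcommon
  have hCTnonneg : ∀ i j, 0 ≤ Cᵀ i j := fun i j => hCnonneg j i
  have hCTrow : ∀ i, ∑ j, Cᵀ i j = 1 := hCcol
  have hC : ∀ v, ((∀ i, 0 ≤ v i) ∧ C.mulVec v = v ∧ ∑ i, v i = n) ↔ IsPerronVector Cᵀ v :=
    fun v => by rw [IsPerronVector, vecMul_transpose]
  refine ⟨existsUnique_isPerronVector hRnonneg hRrow ⟨r, hrR⟩, ?_, fun u v hu hv => ?_⟩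
  · simpa only [hC] using existsUnique_isPerronVector hCTnonneg hCTrow ⟨r, hrC⟩
  have hu_pos := IsPerronVector.pos_iff_mem_rootSet hRnonneg hRrow ⟨r, hrR⟩ hu
  have hv_pos := ((hC v).mp hv).pos_iff_mem_rootSet hCTnonneg hCTrow ⟨r, hrC⟩
  exact ⟨hu_pos, hv_pos, Finset.sum_pos' (fun i _ => mul_nonneg (hu.1 i) (hv.1 i))
    ⟨r, Finset.mem_univ r, mul_pos ((hu_pos r).mpr hrR) ((hv_pos r).mpr hrC)⟩⟩

/-- Existence/uniqueness and positivity structure of the Perron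
eigenvectors `u` (left, for the row-stochastic `R`) and `v` (right, for the
column-stochastic `C`), with `uᵀv > 0`. -/
theorem perron_vectors_push_pull {n : ℕ}
    (R C : Matrix (Fin n) (Fin n) ℝ)
    (hRnonneg : ∀ i j, 0 ≤ R i j) (hRrow : ∀ i, ∑ j, R i j = 1)
    (hRdiag : ∀ i, 0 < R i i)
    (hCnonneg : ∀ i j, 0 ≤ C i j) (hCcol : ∀ j, ∑ i, C i j = 1)
    (hCdiag : ∀ i, 0 < C i i)
    (hRtree : (rootSet R).Nonempty)
    (hCtree : (rootSet Cᵀ).Nonempty)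
    (hcommon : (rootSet R ∩ rootSet Cᵀ).Nonempty) :
    (∃! u : Fin n → ℝ, (∀ i, 0 ≤ u i) ∧ Matrix.vecMul u R = u ∧ ∑ i, u i = n) ∧
    (∃! v : Fin n → ℝ, (∀ i, 0 ≤ v i) ∧ C.mulVec v = v ∧ ∑ i, v i = n) ∧
    (∀ u v : Fin n → ℝ,
      ((∀ i, 0 ≤ u i) ∧ Matrix.vecMul u R = u ∧ ∑ i, u i = n) →
      ((∀ i, 0 ≤ v i) ∧ C.mulVec v = v ∧ ∑ i, v i = n) →
      (∀ i, 0 < u i ↔ i ∈ rootSet R) ∧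
      (∀ j, 0 < v j ↔ j ∈ rootSet Cᵀ) ∧
      0 < u ⬝ᵥ v) :=
  perron_vectors_push_pull_general R C hRnonneg hRrow hCnonneg hCcol hcommon
end

section
/- Let R ∈ ℝ^{n×n} be row-stochastic with positive diagonal entries whose induced digraph 𝒢_R contains a spanning tree, and let u ∈ ℝⁿ be nonnegative with uᵀR = uᵀ and uᵀ𝟙 = n. Let C ∈ ℝ^{n×n} be column-stochastic with positive diagonal entries such that 𝒢_{Cᵀ} contains a spanning tree, and let v ∈ ℝⁿ be nonnegative with Cv = v and 𝟙ᵀv = n. Then there exist K ≥ 0 and ρ ∈ [0,1) such that for all k ≥ 0 and all indices i, j: |(R^k)_{ij} − u_j/n| ≤ K ρ^k and |(C^k)_{ij} − v_i/n| ≤ K ρ^k; i.e., R^k → 𝟙uᵀ/n and C^k → v𝟙ᵀ/n at a linear (geometric) rate. -/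
open Matrix Finset

/-!
Both statements are the same statement about a row-stochastic matrix `M` (for `C`, apply it
to `Cᵀ`). Positive diagonal entries make positivity of `(M ^ k) i r` persist as `k` grows, so
for a root `r` some power `M ^ m` has a column bounded below by `δ > 0`. Averaging with
weights of which at least `δ` sit at one common index shrinks the spread `max - min` of a
column of `M ^ k` by the factor `1 - δ`, so it is at most `(1 - δ) ^ (k / m)`. Since
`uᵀ M ^ k = uᵀ`, the value `u j / n` is a convex combination of column `j` of `M ^ k`, hence
lies within that spread of every entry.
-/

def HasGeometricBound {α : Type*} (e : α → ℕ → ℝ) : Prop :=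
  ∃ K ρ : ℝ, 0 ≤ K ∧ 0 ≤ ρ ∧ ρ < 1 ∧ ∀ a k, e a k ≤ K * ρ ^ k

namespace HasGeometricBound

variable {α β : Type*}

lemma mono {e f : α → ℕ → ℝ} (hf : HasGeometricBound f) (hef : ∀ a k, e a k ≤ f a k) :
    HasGeometricBound e := by
  obtain ⟨K, ρ, hK, hρ0, hρ1, h⟩ := hf
  exact ⟨K, ρ, hK, hρ0, hρ1, fun a k => (hef a k).trans (h a k)⟩

lemma exists_common {e₁ : α → ℕ → ℝ} {e₂ : β → ℕ → ℝ}
    (h₁ : HasGeometricBound e₁) (h₂ : HasGeometricBound e₂) :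
    ∃ K ρ : ℝ, 0 ≤ K ∧ 0 ≤ ρ ∧ ρ < 1 ∧
      (∀ a k, e₁ a k ≤ K * ρ ^ k) ∧ ∀ b k, e₂ b k ≤ K * ρ ^ k := by
  obtain ⟨K₁, ρ₁, hK₁, hρ₁0, hρ₁1, h₁⟩ := h₁
  obtain ⟨K₂, ρ₂, -, hρ₂0, hρ₂1, h₂⟩ := h₂
  refine ⟨max K₁ K₂, max ρ₁ ρ₂, le_max_of_le_left hK₁, le_max_of_le_left hρ₁0,
    max_lt hρ₁1 hρ₂1, fun a k => (h₁ a k).trans ?_, fun b k => (h₂ b k).trans ?_⟩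
  · gcongr <;> exact le_max_left _ _
  · gcongr <;> exact le_max_right _ _

end HasGeometricBound

lemma hasGeometricBound_pow_div (α : Type*) {σ : ℝ} (hσ0 : 0 ≤ σ) (hσ1 : σ < 1) {m : ℕ}
    (hm : 0 < m) : HasGeometricBound fun (_ : α) (k : ℕ) => σ ^ (k / m) := by
  -- `σ` may vanish, so take the `m`-th root of the positive `τ ≥ σ` instead.
  set τ := max σ 2⁻¹
  have hτ0 : 0 < τ := lt_max_of_lt_right (by norm_num)
  have hτ1 : τ < 1 := max_lt hσ1 (by norm_num)
  set ρ := τ ^ ((m : ℝ)⁻¹)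
  have hρm : ρ ^ m = τ := Real.rpow_inv_natCast_pow hτ0.le hm.ne'
  have hρ0 : 0 ≤ ρ := Real.rpow_nonneg hτ0.le _
  have hρ1 : ρ < 1 := Real.rpow_lt_one hτ0.le hτ1 (by positivity)
  refine ⟨τ⁻¹, ρ, by positivity, hρ0, hρ1, fun _ k => ?_⟩
  rw [le_inv_mul_iff₀ hτ0]
  calc τ * σ ^ (k / m) ≤ τ * τ ^ (k / m) := by gcongr; exact le_max_left _ _
    _ = ρ ^ (m * (k / m + 1)) := by rw [pow_mul, hρm, pow_succ']
    _ ≤ ρ ^ k := pow_le_pow_of_le_one hρ0 hρ1.le (Nat.lt_mul_div_succ k hm).le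

section Spread

variable {ι : Type*} [Fintype ι]

/-- For nonempty `ι` this says `max x - min x ≤ D`. -/
def SpreadLE (x : ι → ℝ) (D : ℝ) : Prop :=
  ∃ c, ∀ i, x i ∈ Set.Icc c (c + D)

lemma mul_le_sum_mul_of_le {a y : ι → ℝ} {r : ι} {δ : ℝ} (ha : ∀ l, 0 ≤ a l)
    (hy : ∀ l, 0 ≤ y l) (hδ : δ ≤ a r) : δ * y r ≤ ∑ l, a l * y l :=
  (mul_le_mul_of_nonneg_right hδ (hy r)).trans
    (single_le_sum (fun l _ => mul_nonneg (ha l) (hy l)) (mem_univ r))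

lemma abs_sub_le_of_spreadLE {P : Matrix ι ι ℝ} {w : ι → ℝ} {D : ℝ} {j : ι}
    (hw : ∀ i, 0 ≤ w i) (hw1 : ∑ i, w i = 1) (hwP : w ᵥ* P = w)
    (hP : SpreadLE (fun i => P i j) D) (i : ι) : |P i j - w j| ≤ D := by
  obtain ⟨c, hc⟩ := hP
  have hwj : w j ∈ Set.Icc c (c + D) := by
    rw [← hwP]
    exact (convex_Icc c (c + D)).sum_mem (fun i _ => hw i) hw1 (fun i _ => hc i)
  simpa [Real.dist_eq] using Real.dist_le_of_mem_Icc (hc i) hwj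

variable [DecidableEq ι] {M : Matrix ι ι ℝ} {r : ι} {δ : ℝ}

lemma SpreadLE.mulVec {x : ι → ℝ} {D : ℝ} (hM : M ∈ rowStochastic ℝ ι)
    (hδ : ∀ i, δ ≤ M i r) (hx : SpreadLE x D) : SpreadLE (M *ᵥ x) ((1 - δ) * D) := by
  obtain ⟨c, hc⟩ := hx
  refine ⟨c + δ * (x r - c), fun i => ⟨?_, ?_⟩⟩
  · have hlow := mul_le_sum_mul_of_le (y := fun l => x l - c) (hM.1 i)
      (fun l => sub_nonneg.2 (hc l).1) (hδ i)
    have hsum : ∑ l, M i l * (x l - c) = (M *ᵥ x) i - c := by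
      simp only [mul_sub, sum_sub_distrib, ← sum_mul, sum_row_of_mem_rowStochastic hM, one_mul]
      rfl
    linarith
  · have hup := mul_le_sum_mul_of_le (y := fun l => c + D - x l) (hM.1 i)
      (fun l => sub_nonneg.2 (hc l).2) (hδ i)
    have hsum : ∑ l, M i l * (c + D - x l) = c + D - (M *ᵥ x) i := by
      simp only [mul_sub, sum_sub_distrib, ← sum_mul, sum_row_of_mem_rowStochastic hM, one_mul]
      rfl
    linarith

lemma SpreadLE.pow_mulVec {x : ι → ℝ} {D : ℝ} (hM : M ∈ rowStochastic ℝ ι)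
    (hδ : ∀ i, δ ≤ M i r) (hx : SpreadLE x D) (q : ℕ) :
    SpreadLE (M ^ q *ᵥ x) ((1 - δ) ^ q * D) := by
  induction q with
  | zero => simpa using hx
  | succ q ih =>
    rw [pow_succ', ← mulVec_mulVec, pow_succ', mul_assoc]
    exact ih.mulVec hM hδ

lemma spreadLE_col_of_mem_rowStochastic {P : Matrix ι ι ℝ} (hP : P ∈ rowStochastic ℝ ι)
    (j : ι) : SpreadLE (fun i => P i j) 1 :=
  ⟨0, fun _ => ⟨hP.1 _ _, by simpa using le_one_of_mem_rowStochastic hP⟩⟩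

lemma spreadLE_col_pow {m : ℕ} (hM : M ∈ rowStochastic ℝ ι) (hδ : ∀ i, δ ≤ (M ^ m) i r)
    (k : ℕ) (j : ι) : SpreadLE (fun i => (M ^ k) i j) ((1 - δ) ^ (k / m)) := by
  have hk : M ^ k = (M ^ m) ^ (k / m) * M ^ (k % m) := by
    rw [← pow_mul, ← pow_add, Nat.div_add_mod]
  rw [hk, ← mul_one ((1 - δ) ^ (k / m))]
  exact (spreadLE_col_of_mem_rowStochastic (pow_mem hM (k % m)) j).pow_mulVec
    (pow_mem hM m) hδ (k / m)

end Spread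

section Positivity

variable {ι : Type*} [Fintype ι]

lemma mul_apply_pos_of_pos {A B : Matrix ι ι ℝ} (hA : ∀ i j, 0 ≤ A i j)
    (hB : ∀ i j, 0 ≤ B i j) {i l j : ι} (hil : 0 < A i l) (hlj : 0 < B l j) :
    0 < (A * B) i j :=
  (mul_pos hil hlj).trans_le
    (single_le_sum (f := fun l => A i l * B l j) (fun l _ => mul_nonneg (hA i l) (hB l j))
      (mem_univ l))

variable [DecidableEq ι] {M : Matrix ι ι ℝ}

lemma exists_pow_apply_pos_of_reflTransGen (hM : M ∈ rowStochastic ℝ ι) {i j : ι}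
    (h : Relation.ReflTransGen (fun a b => 0 < M b a) j i) : ∃ k, 0 < (M ^ k) i j := by
  induction h with
  | refl => exact ⟨0, by simp⟩
  | tail _ hbc ih =>
    obtain ⟨k, hk⟩ := ih
    exact ⟨k + 1, by rw [pow_succ']; exact mul_apply_pos_of_pos hM.1 (pow_mem hM k).1 hbc hk⟩

lemma pow_apply_pos_of_le (hM : M ∈ rowStochastic ℝ ι) (hdiag : ∀ i, 0 < M i i)
    {i j : ι} {k m : ℕ} (hkm : k ≤ m) (h : 0 < (M ^ k) i j) : 0 < (M ^ m) i j := by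
  induction m, hkm using Nat.le_induction with
  | base => exact h
  | succ m _ ih =>
    rw [pow_succ']
    exact mul_apply_pos_of_pos hM.1 (pow_mem hM m).1 (hdiag i) ih

lemma exists_pow_col_pos (hM : M ∈ rowStochastic ℝ ι) (hdiag : ∀ i, 0 < M i i) {r : ι}
    (hr : ∀ i, Relation.ReflTransGen (fun a b => 0 < M b a) r i) :
    ∃ m, 0 < m ∧ ∀ i, 0 < (M ^ m) i r := by
  choose k hk using fun i => exists_pow_apply_pos_of_reflTransGen hM (hr i)
  exact ⟨univ.sup k + 1, Nat.succ_pos _, fun i =>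
    pow_apply_pos_of_le hM hdiag ((le_sup (mem_univ i)).trans (Nat.le_succ _)) (hk i)⟩

end Positivity

section Convergence

variable {ι : Type*} [Fintype ι] [DecidableEq ι] {M : Matrix ι ι ℝ}

lemma vecMul_pow_eq_self {w : ι → ℝ} (hwM : w ᵥ* M = w) (k : ℕ) : w ᵥ* M ^ k = w := by
  induction k with
  | zero => simp
  | succ k ih => rw [pow_succ, ← vecMul_vecMul, ih, hwM]

theorem hasGeometricBound_pow_sub (hM : M ∈ rowStochastic ℝ ι) (hdiag : ∀ i, 0 < M i i)
    {r : ι} (hr : ∀ i, Relation.ReflTransGen (fun a b => 0 < M b a) r i) {w : ι → ℝ}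
    (hw : ∀ i, 0 ≤ w i) (hw1 : ∑ i, w i = 1) (hwM : w ᵥ* M = w) :
    HasGeometricBound fun (p : ι × ι) k => |(M ^ k) p.1 p.2 - w p.2| := by
  obtain ⟨m, hm, hpos⟩ := exists_pow_col_pos hM hdiag hr
  have : Nonempty ι := ⟨r⟩
  obtain ⟨i₀, hi₀⟩ := Finite.exists_min fun i => (M ^ m) i r
  have hδ1 : (M ^ m) i₀ r ≤ 1 := le_one_of_mem_rowStochastic (pow_mem hM m)
  refine (hasGeometricBound_pow_div _ (sub_nonneg.2 hδ1) (by linarith [hpos i₀]) hm).mono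
    fun p k => ?_
  exact abs_sub_le_of_spreadLE hw hw1 (vecMul_pow_eq_self hwM k) (spreadLE_col_pow hM hi₀ k _) _

theorem hasGeometricBound_pow_sub_div (hM : M ∈ rowStochastic ℝ ι) (hdiag : ∀ i, 0 < M i i)
    {r : ι} (hr : ∀ i, Relation.ReflTransGen (fun a b => 0 < M b a) r i)
    {u : ι → ℝ} {s : ℝ} (hu : ∀ i, 0 ≤ u i) (huM : u ᵥ* M = u) (hs : ∑ i, u i = s)
    (hs0 : s ≠ 0) :
    HasGeometricBound fun (p : ι × ι) k => |(M ^ k) p.1 p.2 - u p.2 / s| := by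
  have hs_inv : 0 ≤ s⁻¹ := inv_nonneg.2 (hs ▸ sum_nonneg fun i _ => hu i)
  simpa [div_eq_inv_mul] using hasGeometricBound_pow_sub hM hdiag hr (w := s⁻¹ • u)
    (fun i => mul_nonneg hs_inv (hu i)) (by simp [← mul_sum, hs, hs0])
    (by rw [smul_vecMul, huM])

end Convergence

/-- `R^k → 𝟙uᵀ/n` and `C^k → v𝟙ᵀ/n` entrywise at a geometric rate. -/
theorem powers_converge_linearly {n : ℕ}
    (R C : Matrix (Fin n) (Fin n) ℝ) (u v : Fin n → ℝ)
    (hRnonneg : ∀ i j, 0 ≤ R i j) (hRrow : ∀ i, ∑ j, R i j = 1)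
    (hRdiag : ∀ i, 0 < R i i) (hRtree : (rootSet R).Nonempty)
    (hu : ∀ i, 0 ≤ u i) (huR : Matrix.vecMul u R = u) (husum : ∑ i, u i = n)
    (hCnonneg : ∀ i j, 0 ≤ C i j) (hCcol : ∀ j, ∑ i, C i j = 1)
    (hCdiag : ∀ i, 0 < C i i) (hCtree : (rootSet Cᵀ).Nonempty)
    (hv : ∀ i, 0 ≤ v i) (hCv : C.mulVec v = v) (hvsum : ∑ i, v i = n) :
    ∃ K ρ : ℝ, 0 ≤ K ∧ 0 ≤ ρ ∧ ρ < 1 ∧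
      ∀ (k : ℕ) (i j : Fin n),
        |(R ^ k) i j - u j / n| ≤ K * ρ ^ k ∧
        |(C ^ k) i j - v i / n| ≤ K * ρ ^ k := by
  rcases n.eq_zero_or_pos with rfl | hn
  · exact ⟨0, 0, le_rfl, le_rfl, zero_lt_one, fun _ i => i.elim0⟩
  have hn0 : (n : ℝ) ≠ 0 := Nat.cast_ne_zero.2 hn.ne'
  have hR : R ∈ rowStochastic ℝ (Fin n) := mem_rowStochastic_iff_sum.2 ⟨hRnonneg, hRrow⟩
  have hCT : Cᵀ ∈ rowStochastic ℝ (Fin n) :=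
    transpose_mem_rowStochastic_iff_mem_colStochastic.2
      (mem_colStochastic_iff_sum.2 ⟨hCnonneg, hCcol⟩)
  obtain ⟨r, hr⟩ := hRtree
  obtain ⟨s, hs⟩ := hCtree
  obtain ⟨K, ρ, hK, hρ0, hρ1, hRk, hCk⟩ :=
    (hasGeometricBound_pow_sub_div hR hRdiag hr hu huR husum hn0).exists_common
      (hasGeometricBound_pow_sub_div hCT (fun i => hCdiag i) hs hv
        (by rw [vecMul_transpose, hCv]) hvsum hn0)
  refine ⟨K, ρ, hK, hρ0, hρ1, fun k i j => ⟨hRk (i, j) k, ?_⟩⟩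
  simpa [← transpose_pow] using hCk (j, i) k
end

section
/- Let each f_i : ℝᵖ → ℝ be μ-strongly convex with L-Lipschitz continuous gradient and let x* be the unique minimizer of f = ∑_{i=1}^n f_i. Let R ∈ ℝ^{n×n} be row-stochastic with positive diagonal entries, C ∈ ℝ^{n×n} column-stochastic with positive diagonal entries, assume 𝒢_R and 𝒢_{Cᵀ} each contain a spanning tree with ℛ_R ∩ ℛ_{Cᵀ} ≠ ∅, and let 𝛂 = diag(α_1,…,α_n) with all α_i ≥ 0 and α_i > 0 for at least one i ∈ ℛ_R ∩ ℛ_{Cᵀ}. If x, y ∈ ℝ^{n×p} satisfy x = R(x − 𝛂y), y = Cy, and 𝟙ᵀy = 𝟙ᵀ∇F(x), then y = 0 and every row of x equals x*ᵀ (i.e., x = 𝟙x*ᵀ). -/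
/-!
Let `r` be a common root of `𝒢_R` and `𝒢_{Cᵀ}` with `α_r > 0`, and let `u ≥ 0` be a left fixed
vector of `R` with `u_r > 0`. Multiplying `x = R(x − 𝛂y)` by `uᵀ` gives `uᵀ𝛂y = 0` column by column.
A column of `y` is fixed by the column-stochastic `C`, so it has constant sign and, unless it
vanishes, is nonzero at every root of `𝒢_{Cᵀ}`; as the weights `u_i α_i ≥ 0` are positive at `r`,
this forces `y = 0`. Then `x = Rx`, and the maximum principle for the row-stochastic `R` makes all
rows of `x` equal to some `x̄`. The tracking identity now reads `∑ ∇f_i(x̄) = 0 = ∑ ∇f_i(x*)`, and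
strong monotonicity of the gradients gives `x̄ = x*`.
-/

open Matrix

/-- For `x ∈ ℝ^{n×p}` with rows `x_i`, `gradF G x ∈ ℝ^{n×p}` is the matrix whose `i`-th row
is the gradient `G i (x i) = ∇f_i(x_i)`. -/
noncomputable def gradF {n p : ℕ} (G : Fin n → EuclideanSpace ℝ (Fin p) → EuclideanSpace ℝ (Fin p))
    (x : Matrix (Fin n) (Fin p) ℝ) : Matrix (Fin n) (Fin p) ℝ :=
  Matrix.of fun i c => G i (WithLp.toLp 2 (x i)) c

theorem Matrix.col_mul {l m o α : Type*} [NonUnitalNonAssocSemiring α] [Fintype m]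
    (A : Matrix l m α) (B : Matrix m o α) (c : o) :
    (A * B).col c = A *ᵥ B.col c :=
  rfl

section Digraph

variable {n : ℕ} {M : Matrix (Fin n) (Fin n) ℝ}

theorem rootSet_subset_of_pred_closed {S : Set (Fin n)}
    (hS : ∀ a b, 0 < M b a → b ∈ S → a ∈ S) (hne : S.Nonempty) : rootSet M ⊆ S := by
  obtain ⟨i, hi⟩ := hne
  intro r hr
  have hpath := hr i
  revert hi
  induction hpath with
  | refl => exact id
  | tail _ hbc ih => exact fun hc => ih (hS _ _ hbc hc)

theorem le_of_mulVec_eq_self_of_mem_rootSet (hnn : ∀ i j, 0 ≤ M i j)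
    (hrow : ∀ i, ∑ j, M i j = 1) {w : Fin n → ℝ} (hw : M *ᵥ w = w) {r : Fin n}
    (hr : r ∈ rootSet M) (i : Fin n) : w i ≤ w r := by
  obtain ⟨m, -, hm⟩ := Finset.exists_max_image Finset.univ w ⟨r, Finset.mem_univ r⟩
  -- `w b` is an `M`-average of the `w j`, so it is maximal only if all `w j` with `M b j > 0` are
  have hclosed : ∀ a b, 0 < M b a → b ∈ {j | w j = w m} → a ∈ {j | w j = w m} := by
    intro a b hba hb
    have hsum : ∑ j, M b j * (w m - w j) = 0 := by
      have hwb : ∑ j, M b j * w j = w b := congrFun hw b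
      simp only [mul_sub, Finset.sum_sub_distrib, ← Finset.sum_mul, hrow, one_mul, hwb]
      exact sub_eq_zero.2 hb.symm
    have hterm := (Finset.sum_eq_zero_iff_of_nonneg fun j _ =>
      mul_nonneg (hnn b j) (sub_nonneg.2 (hm j (Finset.mem_univ j)))).1 hsum a (Finset.mem_univ a)
    exact (sub_eq_zero.1 ((mul_eq_zero.1 hterm).resolve_left hba.ne')).symm
  have hrm : w r = w m := rootSet_subset_of_pred_closed hclosed ⟨m, rfl⟩ hr
  exact hrm ▸ hm i (Finset.mem_univ i)

theorem eq_of_mulVec_eq_self_of_mem_rootSet (hnn : ∀ i j, 0 ≤ M i j)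
    (hrow : ∀ i, ∑ j, M i j = 1) {w : Fin n → ℝ} (hw : M *ᵥ w = w) {r : Fin n}
    (hr : r ∈ rootSet M) (i : Fin n) : w i = w r := by
  have hneg := le_of_mulVec_eq_self_of_mem_rootSet hnn hrow (w := -w) (by rw [mulVec_neg, hw]) hr i
  exact le_antisymm (le_of_mulVec_eq_self_of_mem_rootSet hnn hrow hw hr i) (neg_le_neg_iff.1 hneg)

theorem row_eq_of_mul_eq_self_of_mem_rootSet {m : Type*} (hnn : ∀ i j, 0 ≤ M i j)
    (hrow : ∀ i, ∑ j, M i j = 1) {X : Matrix (Fin n) m ℝ} (hX : M * X = X) {r : Fin n}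
    (hr : r ∈ rootSet M) (i : Fin n) : X i = X r := by
  ext c
  have hcol : M *ᵥ X.col c = X.col c := by rw [← col_mul, hX]
  exact eq_of_mulVec_eq_self_of_mem_rootSet hnn hrow hcol hr i

end Digraph

section ColumnStochastic

variable {ι : Type*} [Fintype ι] {C : Matrix ι ι ℝ}

theorem sum_mulVec_of_sum_col_eq_one (hcol : ∀ j, ∑ i, C i j = 1) (w : ι → ℝ) :
    ∑ i, (C *ᵥ w) i = ∑ i, w i := by
  simp only [mulVec, dotProduct]
  rw [Finset.sum_comm]
  simp only [← Finset.sum_mul, hcol, one_mul]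

theorem abs_mulVec_eq_self (hnn : ∀ i j, 0 ≤ C i j) (hcol : ∀ j, ∑ i, C i j = 1)
    {w : ι → ℝ} (hw : C *ᵥ w = w) : (C *ᵥ fun i => |w i|) = fun i => |w i| := by
  have hle : ∀ i ∈ Finset.univ, |w i| ≤ (C *ᵥ fun i => |w i|) i := by
    intro i _
    calc |w i| = |∑ j, C i j * w j| := by rw [← congrFun hw i]; rfl
      _ ≤ ∑ j, |C i j * w j| := Finset.abs_sum_le_sum_abs _ _
      _ = (C *ᵥ fun i => |w i|) i := by
        simp only [abs_mul, abs_of_nonneg (hnn _ _)]; rfl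
  funext i
  exact ((Finset.sum_eq_sum_iff_of_le hle).1
    (sum_mulVec_of_sum_col_eq_one hcol _).symm i (Finset.mem_univ i)).symm

end ColumnStochastic

section PushPull

variable {n : ℕ} {C : Matrix (Fin n) (Fin n) ℝ} {r : Fin n}

theorem pos_of_mulVec_eq_self_of_mem_rootSet_transpose (hnn : ∀ i j, 0 ≤ C i j)
    {v : Fin n → ℝ} (hv0 : 0 ≤ v) (hv : C *ᵥ v = v) (hne : v ≠ 0) (hr : r ∈ rootSet Cᵀ) :
    0 < v r := by
  have hclosed : ∀ a b, 0 < Cᵀ b a → b ∈ {i | 0 < v i} → a ∈ {i | 0 < v i} := by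
    intro a b hab hb
    calc 0 < C a b * v b := mul_pos hab hb
      _ ≤ ∑ j, C a j * v j :=
        Finset.single_le_sum (fun j _ => mul_nonneg (hnn a j) (hv0 j)) (Finset.mem_univ b)
      _ = v a := congrFun hv a
  obtain ⟨i, hi⟩ := Function.ne_iff.1 hne
  exact rootSet_subset_of_pred_closed hclosed ⟨i, (hv0 i).lt_of_ne' hi⟩ hr

theorem exists_nonneg_mulVec_eq_self (hnn : ∀ i j, 0 ≤ C i j) (hcol : ∀ j, ∑ i, C i j = 1)
    (hr : r ∈ rootSet Cᵀ) : ∃ v : Fin n → ℝ, 0 ≤ v ∧ C *ᵥ v = v ∧ 0 < v r := by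
  -- `Cᵀ` fixes the all-ones vector, so `1` is an eigenvalue of `Cᵀ` and hence of `C`
  have hdet : (C - 1).det = 0 := by
    rw [← det_transpose, ← exists_mulVec_eq_zero_iff]
    refine ⟨fun _ => 1, fun h => one_ne_zero (congrFun h r), ?_⟩
    rw [transpose_sub, transpose_one, sub_mulVec, one_mulVec, sub_eq_zero]
    ext j
    simp [mulVec, dotProduct, hcol]
  obtain ⟨w, hw0, hw⟩ := exists_mulVec_eq_zero_iff.2 hdet
  rw [sub_mulVec, one_mulVec, sub_eq_zero] at hw
  have hne : (fun i => |w i|) ≠ 0 := fun h => hw0 (funext fun i => abs_eq_zero.1 (congrFun h i))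
  have hfix := abs_mulVec_eq_self hnn hcol hw
  exact ⟨_, fun i => abs_nonneg (w i), hfix,
    pos_of_mulVec_eq_self_of_mem_rootSet_transpose hnn (fun i => abs_nonneg (w i)) hfix hne hr⟩

theorem nonneg_or_nonpos_of_mulVec_eq_self (hnn : ∀ i j, 0 ≤ C i j)
    (hcol : ∀ j, ∑ i, C i j = 1) (hr : r ∈ rootSet Cᵀ) {w : Fin n → ℝ} (hw : C *ᵥ w = w) :
    0 ≤ w ∨ w ≤ 0 := by
  -- `|w| ± w` are nonnegative fixed vectors with vanishing product, so one of them is zero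
  have habs := abs_mulVec_eq_self hnn hcol hw
  have hplus := pos_of_mulVec_eq_self_of_mem_rootSet_transpose hnn
    (v := fun i => |w i| + w i) (fun i => show 0 ≤ |w i| + w i by linarith [neg_abs_le (w i)])
    (by rw [← Pi.add_def, mulVec_add, habs, hw]) (hr := hr)
  have hminus := pos_of_mulVec_eq_self_of_mem_rootSet_transpose hnn
    (v := fun i => |w i| - w i) (fun i => sub_nonneg.2 (le_abs_self (w i)))
    (by rw [← Pi.sub_def, mulVec_sub, habs, hw]) (hr := hr)
  by_contra! h
  obtain ⟨hnonneg, hnonpos⟩ := h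
  refine absurd (mul_pos (hplus ?_) (hminus ?_)) ?_
  · refine fun h0 => hnonpos fun i => show w i ≤ 0 from ?_
    have h0i : |w i| + w i = 0 := congrFun h0 i
    linarith [abs_nonneg (w i)]
  · refine fun h0 => hnonneg fun i => show 0 ≤ w i from ?_
    have h0i : |w i| - w i = 0 := congrFun h0 i
    linarith [abs_nonneg (w i)]
  · nlinarith [sq_abs (w r)]

theorem eq_zero_of_dotProduct_eq_zero (hnn : ∀ i j, 0 ≤ C i j) (hcol : ∀ j, ∑ i, C i j = 1)
    (hr : r ∈ rootSet Cᵀ) {q : Fin n → ℝ} (hq0 : 0 ≤ q) (hqr : 0 < q r) {w : Fin n → ℝ}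
    (hw : C *ᵥ w = w) (hqw : q ⬝ᵥ w = 0) : w = 0 := by
  suffices key : ∀ w, C *ᵥ w = w → 0 ≤ w → q ⬝ᵥ w = 0 → w = 0 by
    rcases nonneg_or_nonpos_of_mulVec_eq_self hnn hcol hr hw with h | h
    · exact key w hw h hqw
    · exact neg_eq_zero.1 <| key (-w) (by rw [mulVec_neg, hw]) (neg_nonneg.2 h)
        (by rw [dotProduct_neg, hqw, neg_zero])
  intro w hw hw0 hqw
  by_contra hne
  have hwr := pos_of_mulVec_eq_self_of_mem_rootSet_transpose hnn hw0 hw hne hr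
  have hpos : 0 < q ⬝ᵥ w := Finset.sum_pos' (fun i _ => mul_nonneg (hq0 i) (hw0 i))
    ⟨r, Finset.mem_univ r, mul_pos hqr hwr⟩
  exact hpos.ne' hqw

theorem eq_zero_of_pushPull_fixed_point {m : Type*} {R : Matrix (Fin n) (Fin n) ℝ}
    (hRnn : ∀ i j, 0 ≤ R i j) (hRrow : ∀ i, ∑ j, R i j = 1)
    (hCnn : ∀ i j, 0 ≤ C i j) (hCcol : ∀ j, ∑ i, C i j = 1)
    (hrR : r ∈ rootSet R) (hrC : r ∈ rootSet Cᵀ) {α : Fin n → ℝ} (hα : 0 ≤ α) (hαr : 0 < α r)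
    {x y : Matrix (Fin n) m ℝ} (hx : x = R * (x - diagonal α * y)) (hy : y = C * y) : y = 0 := by
  obtain ⟨u, hu0, huR, hur⟩ := exists_nonneg_mulVec_eq_self (C := Rᵀ) (fun i j => hRnn j i) hRrow
    (by rwa [transpose_transpose])
  rw [mulVec_transpose] at huR
  refine ext_col fun c => ?_
  have hyc : C *ᵥ y.col c = y.col c := by rw [← col_mul, ← hy]
  refine eq_zero_of_dotProduct_eq_zero hCnn hCcol hrC (q := u * α) (mul_nonneg hu0 hα)
    (mul_pos hur hαr) hyc ?_
  -- `uᵀ R = uᵀ`, so applying `uᵀ` to the `x`-equation cancels `x` and leaves `uᵀ 𝛂 y = 0`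
  have hxc : x.col c = R *ᵥ (x.col c - α * y.col c) := by
    conv_lhs => rw [hx, col_mul]
    congr 1
    ext i
    simp [diagonal_mul]
  have hu : u ⬝ᵥ x.col c = u ⬝ᵥ x.col c - u ⬝ᵥ (α * y.col c) := by
    conv_lhs => rw [hxc, dotProduct_mulVec, huR, dotProduct_sub]
  simp only [dotProduct, Pi.mul_apply, mul_assoc] at hu ⊢
  linarith

end PushPull

section Gradient

variable {E : Type*} [NormedAddCommGroup E] [InnerProductSpace ℝ E] {ι : Type*} [Fintype ι]

theorem IsLocalMin.sum_eq_zero_of_hasGradientAt [CompleteSpace E] {f : ι → E → ℝ} {g : ι → E}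
    {a : E} (hmin : IsLocalMin (fun z => ∑ i, f i z) a) (hgrad : ∀ i, HasGradientAt (f i) (g i) a) :
    ∑ i, g i = 0 := by
  have hF : HasFDerivAt (fun z => ∑ i, f i z) (∑ i, InnerProductSpace.toDual ℝ E (g i)) a :=
    HasFDerivAt.fun_sum fun i _ => hasGradientAt_iff_hasFDerivAt.1 (hgrad i)
  rw [← map_sum] at hF
  exact (InnerProductSpace.toDual ℝ E).map_eq_zero_iff.1 (hmin.hasFDerivAt_eq_zero hF)

theorem eq_of_sum_eq_of_strongly_monotone [Nonempty ι] {G : ι → E → E} {μ : ℝ} (hμ : 0 < μ)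
    (hsc : ∀ i a b, μ * ‖a - b‖ ^ 2 ≤ inner ℝ (G i a - G i b) (a - b)) {a b : E}
    (h : ∑ i, G i a = ∑ i, G i b) : a = b := by
  have hcard : (0 : ℝ) < Fintype.card ι * μ := mul_pos (by exact_mod_cast Fintype.card_pos) hμ
  have hle : Fintype.card ι * μ * ‖a - b‖ ^ 2 ≤ 0 :=
    calc Fintype.card ι * μ * ‖a - b‖ ^ 2 = ∑ _ : ι, μ * ‖a - b‖ ^ 2 := by simp [mul_assoc]
      _ ≤ ∑ i, inner ℝ (G i a - G i b) (a - b) := Finset.sum_le_sum fun i _ => hsc i a b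
      _ = 0 := by rw [← sum_inner, Finset.sum_sub_distrib, h, sub_self, inner_zero_left]
  have hnorm : ‖a - b‖ ^ 2 ≤ 0 := nonpos_of_mul_nonpos_right hle hcard
  rw [← sub_eq_zero, ← norm_eq_zero]
  nlinarith [norm_nonneg (a - b)]

end Gradient

theorem push_pull_fixed_point_optimal_general {n p : ℕ}
    (f : Fin n → EuclideanSpace ℝ (Fin p) → ℝ)
    (G : Fin n → EuclideanSpace ℝ (Fin p) → EuclideanSpace ℝ (Fin p))
    (hgrad : ∀ i z, HasGradientAt (f i) (G i z) z)
    (μ : ℝ) (hμ : 0 < μ)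
    (hsc : ∀ i (a b : EuclideanSpace ℝ (Fin p)),
      μ * ‖a - b‖ ^ 2 ≤ (inner ℝ (G i a - G i b) (a - b) : ℝ))
    (xstar : EuclideanSpace ℝ (Fin p))
    (hmin : ∀ z, ∑ i, f i xstar ≤ ∑ i, f i z)
    (R C : Matrix (Fin n) (Fin n) ℝ)
    (hRnonneg : ∀ i j, 0 ≤ R i j) (hRrow : ∀ i, ∑ j, R i j = 1)
    (hCnonneg : ∀ i j, 0 ≤ C i j) (hCcol : ∀ j, ∑ i, C i j = 1)
    (α : Fin n → ℝ) (hα : ∀ i, 0 ≤ α i)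
    (hαpos : ∃ i ∈ rootSet R ∩ rootSet Cᵀ, 0 < α i)
    (x y : Matrix (Fin n) (Fin p) ℝ)
    (hx : x = R * (x - Matrix.diagonal α * y))
    (hy : y = C * y)
    (htrack : ∀ c, ∑ i, y i c = ∑ i, gradF G x i c) :
    y = 0 ∧ ∀ i c, x i c = xstar c := by
  obtain ⟨r, ⟨hrR, hrC⟩, hαr⟩ := hαpos
  have hy0 : y = 0 :=
    eq_zero_of_pushPull_fixed_point hRnonneg hRrow hCnonneg hCcol hrR hrC hα hαr hx hy
  have hrows : ∀ i, x i = x r :=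
    row_eq_of_mul_eq_self_of_mem_rootSet hRnonneg hRrow (by simpa [hy0] using hx.symm) hrR
  set xr : EuclideanSpace ℝ (Fin p) := WithLp.toLp 2 (x r)
  have hGxr : ∑ i, G i xr = 0 := by
    ext c
    simpa [hy0, gradF, hrows, WithLp.ofLp_sum, eq_comm] using htrack c
  have hGstar : ∑ i, G i xstar = 0 :=
    IsLocalMin.sum_eq_zero_of_hasGradientAt (Filter.Eventually.of_forall hmin) fun i =>
      hgrad i xstar
  have hxr : xr = xstar :=
    haveI : Nonempty (Fin n) := ⟨r⟩
    eq_of_sum_eq_of_strongly_monotone hμ hsc (hGxr.trans hGstar.symm)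
  exact ⟨hy0, fun i c => by rw [hrows i, ← hxr]⟩

/-- Any fixed point of the Push-Pull iteration satisfying the gradient
tracking identity is optimal: `y = 0` and every row of `x` equals `x*`. -/
theorem push_pull_fixed_point_optimal {n p : ℕ}
    (f : Fin n → EuclideanSpace ℝ (Fin p) → ℝ)
    (G : Fin n → EuclideanSpace ℝ (Fin p) → EuclideanSpace ℝ (Fin p))
    (hgrad : ∀ i z, HasGradientAt (f i) (G i z) z)
    (μ L : ℝ) (hμ : 0 < μ) (hμL : μ ≤ L)
    (hsc : ∀ i (a b : EuclideanSpace ℝ (Fin p)),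
      μ * ‖a - b‖ ^ 2 ≤ (inner ℝ (G i a - G i b) (a - b) : ℝ))
    (hlip : ∀ i (a b : EuclideanSpace ℝ (Fin p)), ‖G i a - G i b‖ ≤ L * ‖a - b‖)
    (xstar : EuclideanSpace ℝ (Fin p))
    (hmin : ∀ z, ∑ i, f i xstar ≤ ∑ i, f i z)
    (R C : Matrix (Fin n) (Fin n) ℝ)
    (hRnonneg : ∀ i j, 0 ≤ R i j) (hRrow : ∀ i, ∑ j, R i j = 1) (hRdiag : ∀ i, 0 < R i i)
    (hCnonneg : ∀ i j, 0 ≤ C i j) (hCcol : ∀ j, ∑ i, C i j = 1) (hCdiag : ∀ i, 0 < C i i)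
    (hRtree : (rootSet R).Nonempty) (hCtree : (rootSet Cᵀ).Nonempty)
    (hcommon : (rootSet R ∩ rootSet Cᵀ).Nonempty)
    (α : Fin n → ℝ) (hα : ∀ i, 0 ≤ α i)
    (hαpos : ∃ i ∈ rootSet R ∩ rootSet Cᵀ, 0 < α i)
    (x y : Matrix (Fin n) (Fin p) ℝ)
    (hx : x = R * (x - Matrix.diagonal α * y))
    (hy : y = C * y)
    (htrack : ∀ c, ∑ i, y i c = ∑ i, gradF G x i c) :
    y = 0 ∧ ∀ i c, x i c = xstar c :=
  push_pull_fixed_point_optimal_general f G hgrad μ hμ hsc xstar hmin R C hRnonneg hRrow hCnonneg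
    hCcol α hα hαpos x y hx hy htrack
end

section
/- Let R ∈ ℝ^{n×n} be row-stochastic with positive diagonal entries whose induced digraph 𝒢_R contains a spanning tree, and let u ∈ ℝⁿ be nonnegative with uᵀR = uᵀ and uᵀ𝟙 = n. Let C ∈ ℝ^{n×n} be column-stochastic with positive diagonal entries such that 𝒢_{Cᵀ} contains a spanning tree, and let v ∈ ℝⁿ be nonnegative with Cv = v and 𝟙ᵀv = n. Then every complex eigenvalue of the matrix R − (1/n)𝟙uᵀ has modulus strictly less than 1, and every complex eigenvalue of C − (1/n)v𝟙ᵀ has modulus strictly less than 1. -/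
/-!
Write `A = R - 𝟙uᵀ/n`. Since `uᵀR = uᵀ` and `uᵀ𝟙 = n`, we get `uᵀA = 0`, so an eigenvector `x`
of `A` for an eigenvalue `μ ≠ 0` satisfies `uᵀx = 0` and hence `Rx = μx`. Looking at a coordinate
where `|xᵢ|` is maximal, `|μ - Rᵢᵢ| ≤ 1 - Rᵢᵢ`; as `Rᵢᵢ > 0` this disc meets the closed exterior of
the unit disc only at `1`, so `|μ| ≥ 1` forces `μ = 1`. A fixed vector of `R` is constant, because
the maximum of its real (or imaginary) part propagates backwards along the edges of `𝒢_R` and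
reaches the root; a constant vector with `uᵀx = 0` vanishes. The claim for `C` is the claim
for `Cᵀ`.
-/

open Matrix

theorem Complex.eq_one_of_norm_sub_ofReal_le {z : ℂ} {d : ℝ} (hd : 0 < d)
    (h : ‖z - d‖ ≤ 1 - d) (hz : 1 ≤ ‖z‖) : z = 1 := by
  have hle : ‖z‖ ≤ 1 :=
    calc ‖z‖ ≤ ‖z - d‖ + ‖(d : ℂ)‖ := norm_le_norm_sub_add z d
      _ ≤ 1 := by rw [norm_real, Real.norm_of_nonneg hd.le]; linarith
  have hnorm : z.re ^ 2 + z.im ^ 2 = 1 := by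
    have := congrArg (· ^ 2) (le_antisymm hle hz)
    simp only [Complex.sq_norm, Complex.normSq_apply, one_pow] at this
    linarith
  have hsub : (z.re - d) ^ 2 + z.im ^ 2 ≤ (1 - d) ^ 2 := by
    have := pow_le_pow_left₀ (norm_nonneg _) h 2
    rw [Complex.sq_norm, Complex.normSq_apply] at this
    simpa [sq] using this
  have hre : z.re = 1 := by nlinarith
  have him : z.im = 0 := pow_eq_zero_iff two_ne_zero |>.1 (by nlinarith)
  exact Complex.ext hre him

theorem Matrix.exists_mulVec_eq_smul_of_isRoot_charpoly {ι K : Type*} [Fintype ι] [DecidableEq ι]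
    [CommRing K] [IsDomain K] (A : Matrix ι ι K) {μ : K} (h : A.charpoly.IsRoot μ) :
    ∃ x ≠ 0, A *ᵥ x = μ • x := by
  rw [← charpoly_toLin', ← Module.End.hasEigenvalue_iff_isRoot_charpoly] at h
  obtain ⟨x, hx⟩ := h.exists_hasEigenvector
  exact ⟨x, hx.2, by simpa using hx.apply_eq_smul⟩

namespace Matrix

variable {ι : Type*}

section Deflation

variable {K : Type*} [Field K]

def deflate (R : Matrix ι ι K) (u : ι → K) (c : K) : Matrix ι ι K :=
  R - of fun _ j => u j / c

theorem map_deflate {L : Type*} [Field L] (f : K →+* L) (R : Matrix ι ι K) (u : ι → K) (c : K) :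
    (deflate R u c).map f = deflate (R.map f) (f ∘ u) (f c) := by
  ext i j
  simp [deflate]

variable [Fintype ι]

theorem vecMul_deflate_eq_zero {R : Matrix ι ι K} {u : ι → K} {c : K} (huR : u ᵥ* R = u)
    (hu : ∑ i, u i = c) (hc : c ≠ 0) : u ᵥ* deflate R u c = 0 := by
  rw [deflate, vecMul_sub, huR, sub_eq_zero]
  ext j
  simp only [vecMul, dotProduct, of_apply]
  rw [← Finset.sum_mul, hu, mul_div_cancel₀ _ hc]

theorem mulVec_eq_smul_of_deflate_mulVec_eq_smul {R : Matrix ι ι K} {u x : ι → K} {c μ : K}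
    (huR : u ᵥ* R = u) (hu : ∑ i, u i = c) (hc : c ≠ 0) (hμ : μ ≠ 0)
    (hx : deflate R u c *ᵥ x = μ • x) : u ⬝ᵥ x = 0 ∧ R *ᵥ x = μ • x := by
  have hux : u ⬝ᵥ x = 0 := by
    have : μ * (u ⬝ᵥ x) = 0 := by
      rw [← smul_eq_mul, ← dotProduct_smul, ← hx, dotProduct_mulVec,
        vecMul_deflate_eq_zero huR hu hc, zero_dotProduct]
    exact (mul_eq_zero.1 this).resolve_left hμ
  refine ⟨hux, ?_⟩
  have hrank_one : (of fun (_ : ι) j => u j / c) *ᵥ x = 0 := by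
    ext i
    simp only [mulVec, dotProduct, of_apply, Pi.zero_apply, div_mul_eq_mul_div, ← Finset.sum_div]
    rw [← dotProduct, hux, zero_div]
  rw [← hx, deflate, sub_mulVec, hrank_one, sub_zero]

end Deflation

section RowStochastic

variable [Fintype ι] [DecidableEq ι] {R : Matrix ι ι ℝ}

theorem apply_eq_of_reflTransGen_of_mulVec_eq_self (hR : R ∈ rowStochastic ℝ ι) {y : ι → ℝ}
    (hy : R *ᵥ y = y) {i : ι} (hi : ∀ j, y j ≤ y i) {a : ι}
    (ha : Relation.ReflTransGen (fun a b => 0 < R b a) a i) : y a = y i := by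
  induction ha using Relation.ReflTransGen.head_induction_on with
  | refl => rfl
  | @head a b hab _ ih =>
    have hgap : ∑ j, R b j * (y i - y j) = 0 := by
      simp only [mul_sub, Finset.sum_sub_distrib, ← Finset.sum_mul,
        sum_row_of_mem_rowStochastic hR, one_mul]
      rw [← ih]
      exact sub_eq_zero.2 (congrFun hy b).symm
    have hterm := (Finset.sum_eq_zero_iff_of_nonneg fun j _ =>
      mul_nonneg (nonneg_of_mem_rowStochastic hR) (sub_nonneg.2 (hi j))).1 hgap a
      (Finset.mem_univ a)
    linarith [(mul_eq_zero.1 hterm).resolve_left hab.ne']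

theorem le_apply_of_mulVec_eq_self (hR : R ∈ rowStochastic ℝ ι) {y : ι → ℝ} (hy : R *ᵥ y = y)
    {r : ι} (hr : ∀ i, Relation.ReflTransGen (fun a b => 0 < R b a) r i) (i : ι) :
    y i ≤ y r := by
  obtain ⟨m, -, hm⟩ := Finset.exists_max_image Finset.univ y ⟨r, Finset.mem_univ r⟩
  rw [apply_eq_of_reflTransGen_of_mulVec_eq_self hR hy (fun j => hm j (Finset.mem_univ j)) (hr m)]
  exact hm i (Finset.mem_univ i)

theorem apply_eq_of_mulVec_eq_self (hR : R ∈ rowStochastic ℝ ι) {y : ι → ℝ} (hy : R *ᵥ y = y)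
    {r : ι} (hr : ∀ i, Relation.ReflTransGen (fun a b => 0 < R b a) r i) (i : ι) :
    y i = y r :=
  le_antisymm (le_apply_of_mulVec_eq_self hR hy hr i)
    (neg_le_neg_iff.1 (le_apply_of_mulVec_eq_self hR (y := -y) (by rw [mulVec_neg, hy]) hr i))

theorem apply_eq_of_map_ofReal_mulVec_eq_self (hR : R ∈ rowStochastic ℝ ι) {x : ι → ℂ}
    (hx : R.map Complex.ofReal *ᵥ x = x) {r : ι}
    (hr : ∀ i, Relation.ReflTransGen (fun a b => 0 < R b a) r i) (i : ι) : x i = x r := by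
  have hre : R *ᵥ (fun j => (x j).re) = fun j => (x j).re := by
    ext k
    simpa [mulVec, dotProduct, Complex.re_sum] using congrArg Complex.re (congrFun hx k)
  have him : R *ᵥ (fun j => (x j).im) = fun j => (x j).im := by
    ext k
    simpa [mulVec, dotProduct, Complex.im_sum] using congrArg Complex.im (congrFun hx k)
  exact Complex.ext (apply_eq_of_mulVec_eq_self hR hre hr i)
    (apply_eq_of_mulVec_eq_self hR him hr i)

theorem eq_one_of_map_ofReal_mulVec_eq_smul (hR : R ∈ rowStochastic ℝ ι) (hdiag : ∀ i, 0 < R i i)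
    {x : ι → ℂ} (hx : x ≠ 0) {μ : ℂ} (hμx : R.map Complex.ofReal *ᵥ x = μ • x) (hμ : 1 ≤ ‖μ‖) :
    μ = 1 := by
  obtain ⟨k, hk⟩ := Function.ne_iff.1 hx
  obtain ⟨i, -, hi⟩ :=
    Finset.exists_max_image Finset.univ (fun j => ‖x j‖) ⟨k, Finset.mem_univ k⟩
  have hpos : 0 < ‖x i‖ := (norm_pos_iff.2 hk).trans_le (hi k (Finset.mem_univ k))
  set s := Finset.univ.erase i
  have hrow : R i i + ∑ j ∈ s, R i j = 1 := by
    rw [Finset.add_sum_erase _ _ (Finset.mem_univ i)]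
    exact sum_row_of_mem_rowStochastic hR i
  have hoff : (μ - R i i) * x i = ∑ j ∈ s, (R i j : ℂ) * x j := by
    have := congrFun hμx i
    simp only [mulVec, dotProduct, map_apply, Pi.smul_apply, smul_eq_mul] at this
    rw [← Finset.add_sum_erase _ _ (Finset.mem_univ i)] at this
    linear_combination -this
  have hdisc : ‖μ - R i i‖ * ‖x i‖ ≤ (1 - R i i) * ‖x i‖ :=
    calc ‖μ - R i i‖ * ‖x i‖ = ‖∑ j ∈ s, (R i j : ℂ) * x j‖ := by rw [← norm_mul, hoff]
      _ ≤ ∑ j ∈ s, R i j * ‖x i‖ := by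
        refine norm_sum_le_of_le _ fun j _ => ?_
        rw [norm_mul, Complex.norm_real, Real.norm_of_nonneg (nonneg_of_mem_rowStochastic hR)]
        exact mul_le_mul_of_nonneg_left (hi j (Finset.mem_univ j)) (nonneg_of_mem_rowStochastic hR)
      _ = (1 - R i i) * ‖x i‖ := by rw [← Finset.sum_mul, ← hrow, add_sub_cancel_left]
  exact Complex.eq_one_of_norm_sub_ofReal_le (hdiag i) (le_of_mul_le_mul_right hdisc hpos) hμ

end RowStochastic

end Matrix

theorem norm_lt_one_of_isRoot_charpoly_deflate {n : ℕ} {R : Matrix (Fin n) (Fin n) ℝ}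
    {u : Fin n → ℝ} (hR : R ∈ rowStochastic ℝ (Fin n)) (hdiag : ∀ i, 0 < R i i)
    (hroot : (rootSet R).Nonempty) (huR : u ᵥ* R = u) (hu : ∑ i, u i = n) {μ : ℂ}
    (hμ : ((deflate R u n).map Complex.ofReal).charpoly.IsRoot μ) : ‖μ‖ < 1 := by
  obtain ⟨r, hr⟩ := hroot
  have hn : (n : ℂ) ≠ 0 := Nat.cast_ne_zero.2 (Fin.pos r).ne'
  by_contra! h1
  have hμ0 : μ ≠ 0 := by
    rintro rfl
    norm_num at h1
  obtain ⟨x, hx0, hx⟩ := exists_mulVec_eq_smul_of_isRoot_charpoly _ hμ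
  have huR' : (Complex.ofReal ∘ u) ᵥ* R.map Complex.ofReal = Complex.ofReal ∘ u := by
    ext j
    have := RingHom.map_vecMul Complex.ofRealHom R u j
    rw [huR] at this
    exact this.symm
  rw [show (deflate R u n).map Complex.ofReal = _ from map_deflate Complex.ofRealHom R u n] at hx
  obtain ⟨hux, hRx⟩ := mulVec_eq_smul_of_deflate_mulVec_eq_smul huR'
    (by simp [← Complex.ofReal_sum, hu]) (by simpa using hn) hμ0 hx
  obtain rfl := eq_one_of_map_ofReal_mulVec_eq_smul hR hdiag hx0 hRx h1
  have hconst := apply_eq_of_map_ofReal_mulVec_eq_self hR (by simpa using hRx) hr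
  have hxr : (n : ℂ) * x r = 0 := by
    simpa [dotProduct, hconst, ← Finset.sum_mul, ← Complex.ofReal_sum, hu] using hux
  exact hx0 (funext fun i => (hconst i).trans ((mul_eq_zero.1 hxr).resolve_left hn))

theorem spectral_radii_lt_one_general {n : ℕ}
    (R C : Matrix (Fin n) (Fin n) ℝ) (u v : Fin n → ℝ)
    (hRnonneg : ∀ i j, 0 ≤ R i j) (hRrow : ∀ i, ∑ j, R i j = 1)
    (hRdiag : ∀ i, 0 < R i i) (hRtree : (rootSet R).Nonempty)
    (huR : Matrix.vecMul u R = u) (husum : ∑ i, u i = n)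
    (hCnonneg : ∀ i j, 0 ≤ C i j) (hCcol : ∀ j, ∑ i, C i j = 1)
    (hCdiag : ∀ i, 0 < C i i) (hCtree : (rootSet Cᵀ).Nonempty)
    (hCv : C.mulVec v = v) (hvsum : ∑ i, v i = n) :
    (∀ lam : ℂ,
      (((R - Matrix.of fun _ j => u j / n).map (fun t : ℝ => (t : ℂ))).charpoly).IsRoot lam →
        ‖lam‖ < 1) ∧
    (∀ lam : ℂ,
      (((C - Matrix.of fun i _ => v i / n).map (fun t : ℝ => (t : ℂ))).charpoly).IsRoot lam →
        ‖lam‖ < 1) := by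
  have hR : R ∈ rowStochastic ℝ (Fin n) := mem_rowStochastic_iff_sum.2 ⟨hRnonneg, hRrow⟩
  have hC : Cᵀ ∈ rowStochastic ℝ (Fin n) :=
    transpose_mem_rowStochastic_iff_mem_colStochastic.2 <|
      mem_colStochastic_iff_sum.2 ⟨hCnonneg, hCcol⟩
  refine ⟨fun μ hμ => norm_lt_one_of_isRoot_charpoly_deflate hR hRdiag hRtree huR husum hμ,
    fun μ hμ => norm_lt_one_of_isRoot_charpoly_deflate hC hCdiag hCtree
      (by rw [vecMul_transpose, hCv]) hvsum ?_⟩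
  have hT : deflate Cᵀ v n = (C - Matrix.of fun i _ => v i / n)ᵀ := by
    ext i j
    rfl
  rwa [hT, transpose_map, charpoly_transpose]

/-- All complex eigenvalues of `R − 𝟙uᵀ/n` and of `C − v𝟙ᵀ/n` have
modulus strictly less than `1`. -/
theorem spectral_radii_lt_one {n : ℕ}
    (R C : Matrix (Fin n) (Fin n) ℝ) (u v : Fin n → ℝ)
    (hRnonneg : ∀ i j, 0 ≤ R i j) (hRrow : ∀ i, ∑ j, R i j = 1)
    (hRdiag : ∀ i, 0 < R i i) (hRtree : (rootSet R).Nonempty)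
    (hu : ∀ i, 0 ≤ u i) (huR : Matrix.vecMul u R = u) (husum : ∑ i, u i = n)
    (hCnonneg : ∀ i j, 0 ≤ C i j) (hCcol : ∀ j, ∑ i, C i j = 1)
    (hCdiag : ∀ i, 0 < C i i) (hCtree : (rootSet Cᵀ).Nonempty)
    (hv : ∀ i, 0 ≤ v i) (hCv : C.mulVec v = v) (hvsum : ∑ i, v i = n) :
    (∀ lam : ℂ,
      (((R - Matrix.of fun _ j => u j / n).map (fun t : ℝ => (t : ℂ))).charpoly).IsRoot lam →
        ‖lam‖ < 1) ∧
    (∀ lam : ℂ,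
      (((C - Matrix.of fun i _ => v i / n).map (fun t : ℝ => (t : ℂ))).charpoly).IsRoot lam →
        ‖lam‖ < 1) :=
  spectral_radii_lt_one_general R C u v hRnonneg hRrow hRdiag hRtree huR husum hCnonneg hCcol hCdiag
    hCtree hCv hvsum
end

section
/- Let each f_i : ℝᵖ → ℝ be μ-strongly convex with L-Lipschitz continuous gradient and x* the unique minimizer of ∑_i f_i. Let R ∈ ℝ^{n×n} be row-stochastic, u ∈ ℝⁿ nonnegative with uᵀR = uᵀ and uᵀ𝟙 = n; let v ∈ ℝⁿ be nonnegative with 𝟙ᵀv = n. Let 𝛂 = diag(α_1,…,α_n) with α_i ≥ 0, set ᾱ := max_i α_i and α′ := uᵀ𝛂v/n. Let N_R and N_C be norms on ℝⁿ with ‖z‖₂ ≤ N_R(z) and ‖z‖₂ ≤ N_C(z) for all z ∈ ℝⁿ, extended columnwise to ℝ^{n×p} as 𝒩_R, 𝒩_C. Let x, y ∈ ℝ^{n×p} satisfy 𝟙ᵀy = 𝟙ᵀ∇F(x); set x̄ := (1/n)xᵀu ∈ ℝᵖ, ȳ := (1/n)yᵀ𝟙 ∈ ℝᵖ, x⁺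 := R(x − 𝛂y), and x̄⁺ := (1/n)(x⁺)ᵀu. If α′ ≤ 2/(μ+L), then ‖x̄⁺ − x*‖₂ ≤ (1 − α′μ)‖x̄ − x*‖₂ + (α′L/√n)·𝒩_R(x − 𝟙x̄ᵀ) + (ᾱ‖u‖₂/n)·𝒩_C(y − vȳᵀ). -/
/-!
Since `uᵀR = uᵀ`, the averaged iterate is `x̄⁺ = x̄ - (1/n) ∑ uᵢαᵢyᵢ`. Splitting
`yᵢ = vᵢȳ + (yᵢ - vᵢȳ)` and using `∑ uᵢαᵢvᵢ = nα'` and `ȳ = (1/n) ∑ ∇fᵢ(xᵢ)`, one gets, with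
`f = ∑ fᵢ`,
`x̄⁺ - x* = (x̄ - (α'/n)∇f(x̄) - x*) + (α'/n) ∑ (∇fᵢ(x̄) - ∇fᵢ(xᵢ)) - (1/n) ∑ uᵢαᵢ(yᵢ - vᵢȳ)`.
Since `∇f(x*) = 0`, the first term compares two gradient steps of the `nμ`-strongly convex,
`nL`-smooth `f`; for a step `β ≤ 2/(σ + Λ)` such a step contracts by `1 - βσ`, which rests on the
co-coercivity of the gradient of the convex function `f - σ/2 ‖·‖²`. The other two terms are
bounded by Lipschitz continuity and Cauchy–Schwarz, using `‖·‖₂ ≤ N` column by column.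
-/

open Matrix

/-- `N` is a norm on `ℝⁿ`. -/
def IsNormOn {n : ℕ} (N : (Fin n → ℝ) → ℝ) : Prop :=
  (∀ z, 0 ≤ N z) ∧ (∀ z, N z = 0 ↔ z = 0) ∧
  (∀ (c : ℝ) (z : Fin n → ℝ), N (c • z) = |c| * N z) ∧
  (∀ z w : Fin n → ℝ, N (z + w) ≤ N z + N w)

/-- Columnwise extension of a norm `N` on `ℝⁿ` to `n×p` matrices. -/
noncomputable def colNorm {n p : ℕ} (N : (Fin n → ℝ) → ℝ) (X : Matrix (Fin n) (Fin p) ℝ) : ℝ :=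
  Real.sqrt (∑ c, N (fun i => X i c) ^ 2)

/-- Euclidean norm. -/
noncomputable def e2 {p : ℕ} (a : Fin p → ℝ) : ℝ :=
  Real.sqrt (∑ c, a c ^ 2)

open InnerProductSpace Set

theorem le_add_deriv_add_of_deriv_sub_le {φ φ' : ℝ → ℝ} (hφ : ∀ t, HasDerivAt φ (φ' t) t) {c : ℝ}
    (hφ' : ∀ t ∈ Icc (0 : ℝ) 1, φ' t ≤ φ' 0 + c * t) :
    φ 1 ≤ φ 0 + φ' 0 + c / 2 := by
  have hB : ∀ t, HasDerivAt (fun t => φ 0 + φ' 0 * t + c / 2 * t ^ 2) (φ' 0 + c * t) t := by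
    intro t
    refine ((((hasDerivAt_id t).const_mul (φ' 0)).const_add (φ 0)).add
      ((hasDerivAt_pow 2 t).const_mul (c / 2))).congr_deriv ?_
    simp only [Nat.cast_ofNat]
    ring
  have := image_le_of_deriv_right_le_deriv_boundary (a := 0) (b := 1)
    (fun t _ => (hφ t).continuousAt.continuousWithinAt) (fun t _ => (hφ t).hasDerivWithinAt)
    (by simp) (fun t _ => (hB t).continuousAt.continuousWithinAt)
    (fun t _ => (hB t).hasDerivWithinAt)
    (fun t ht => hφ' t (Ico_subset_Icc_self ht)) (right_mem_Icc.2 zero_le_one)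
  simpa using this

section Gradient

variable {F : Type*} [NormedAddCommGroup F] [InnerProductSpace ℝ F] [CompleteSpace F]
  {g : F → ℝ} {g' : F → F}

theorem le_add_inner_add_of_inner_sub_le (hg : ∀ z, HasGradientAt g (g' z) z) {K : ℝ}
    (hK : ∀ a b, ⟪g' a - g' b, a - b⟫_ℝ ≤ K * ‖a - b‖ ^ 2) (a b : F) :
    g b ≤ g a + ⟪g' a, b - a⟫_ℝ + K / 2 * ‖b - a‖ ^ 2 := by
  have hline : ∀ t : ℝ, HasDerivAt (fun s : ℝ => g (a + s • (b - a)))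
      ⟪g' (a + t • (b - a)), b - a⟫_ℝ t := fun t => by
    have hγ : HasDerivAt (fun s : ℝ => a + s • (b - a)) (b - a) t := by
      simpa using ((hasDerivAt_id t).smul_const (b - a)).const_add a
    simpa [toDual_apply_apply, Function.comp_def] using
      (hg (a + t • (b - a))).hasFDerivAt.comp_hasDerivAt t hγ
  have key := le_add_deriv_add_of_deriv_sub_le hline (c := K * ‖b - a‖ ^ 2) ?_
  · simp only [zero_smul, add_zero, one_smul, add_sub_cancel] at key
    linarith
  intro t ht
  rcases ht.1.eq_or_lt with rfl | ht0
  · simp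
  have h := hK (a + t • (b - a)) a
  rw [add_sub_cancel_left, norm_smul, Real.norm_eq_abs, abs_of_pos ht0, real_inner_smul_right,
    inner_sub_left] at h
  simp only [zero_smul, add_zero]
  nlinarith

theorem add_inner_add_le_of_le_inner_sub (hg : ∀ z, HasGradientAt g (g' z) z) {m : ℝ}
    (hm : ∀ a b, m * ‖a - b‖ ^ 2 ≤ ⟪g' a - g' b, a - b⟫_ℝ) (a b : F) :
    g a + ⟪g' a, b - a⟫_ℝ + m / 2 * ‖b - a‖ ^ 2 ≤ g b := by
  have hneg : ∀ z, HasGradientAt (-g) (-g' z) z := fun z => by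
    rw [hasGradientAt_iff_hasFDerivAt, map_neg]
    exact (hg z).hasFDerivAt.neg
  have := le_add_inner_add_of_inner_sub_le hneg (K := -m)
    (fun a b => by rw [← neg_sub', inner_neg_left]; linarith [hm a b]) a b
  simp only [Pi.neg_apply, inner_neg_left] at this
  linarith

theorem norm_sub_sq_le_mul_inner_sub (hg : ∀ z, HasGradientAt g (g' z) z) {K : ℝ} (hK0 : 0 < K)
    (hmono : ∀ a b, 0 ≤ ⟪g' a - g' b, a - b⟫_ℝ)
    (hK : ∀ a b, ⟪g' a - g' b, a - b⟫_ℝ ≤ K * ‖a - b‖ ^ 2) (a b : F) :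
    ‖g' a - g' b‖ ^ 2 ≤ K * ⟪g' a - g' b, a - b⟫_ℝ := by
  -- Compare `g` at `d - K⁻¹ • (g' d - g' c)` from above (around `d`) and from below (around `c`).
  have hbregman : ∀ c d, g c + ⟪g' c, d - c⟫_ℝ + (2 * K)⁻¹ * ‖g' d - g' c‖ ^ 2 ≤ g d := by
    intro c d
    set Δ := g' d - g' c with hΔ
    have hup := le_add_inner_add_of_inner_sub_le hg hK d (d - K⁻¹ • Δ)
    have hlow := add_inner_add_le_of_le_inner_sub hg (m := 0) (by simpa using hmono) c
      (d - K⁻¹ • Δ)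
    have hΔΔ : ⟪g' d, Δ⟫_ℝ - ⟪g' c, Δ⟫_ℝ = ‖Δ‖ ^ 2 := by
      rw [← inner_sub_left, real_inner_self_eq_norm_sq]
    rw [sub_sub_cancel_left, inner_neg_right, real_inner_smul_right, norm_neg, norm_smul,
      Real.norm_eq_abs, abs_inv, abs_of_pos hK0] at hup
    rw [sub_right_comm, inner_sub_right, real_inner_smul_right] at hlow
    have hK2 : K / 2 * (K⁻¹ * ‖Δ‖) ^ 2 = K⁻¹ * ‖Δ‖ ^ 2 - (2 * K)⁻¹ * ‖Δ‖ ^ 2 := by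
      field_simp; ring
    have hKΔ : K⁻¹ * ⟪g' d, Δ⟫_ℝ - K⁻¹ * ⟪g' c, Δ⟫_ℝ = K⁻¹ * ‖Δ‖ ^ 2 := by rw [← mul_sub, hΔΔ]
    linarith
  have h := add_le_add (hbregman a b) (hbregman b a)
  rw [norm_sub_rev (g' b)] at h
  have hinner : ⟪g' a, b - a⟫_ℝ + ⟪g' b, a - b⟫_ℝ = -⟪g' a - g' b, a - b⟫_ℝ := by
    rw [← neg_sub a b, inner_neg_right, inner_sub_left]; ring
  have : K⁻¹ * ‖g' a - g' b‖ ^ 2 ≤ ⟪g' a - g' b, a - b⟫_ℝ := by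
    have : (2 * K)⁻¹ * ‖g' a - g' b‖ ^ 2 + (2 * K)⁻¹ * ‖g' a - g' b‖ ^ 2
        = K⁻¹ * ‖g' a - g' b‖ ^ 2 := by field_simp; ring
    linarith
  rwa [inv_mul_le_iff₀ hK0] at this

theorem norm_sq_add_mul_mul_le_inner_sub (hg : ∀ z, HasGradientAt g (g' z) z) {σ Λ : ℝ}
    (hσΛ : σ ≤ Λ) (hσ : ∀ a b, σ * ‖a - b‖ ^ 2 ≤ ⟪g' a - g' b, a - b⟫_ℝ)
    (hΛ : ∀ a b, ‖g' a - g' b‖ ≤ Λ * ‖a - b‖) (a b : F) :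
    ‖g' a - g' b‖ ^ 2 + σ * Λ * ‖a - b‖ ^ 2 ≤ (σ + Λ) * ⟪g' a - g' b, a - b⟫_ℝ := by
  have hcs := real_inner_le_norm (g' a - g' b) (a - b)
  rcases hσΛ.eq_or_lt with rfl | hlt
  · have hle : ‖g' a - g' b‖ * ‖a - b‖ ≤ σ * ‖a - b‖ * ‖a - b‖ :=
      mul_le_mul_of_nonneg_right (hΛ a b) (norm_nonneg _)
    have heq : ⟪g' a - g' b, a - b⟫_ℝ = σ * ‖a - b‖ ^ 2 := by nlinarith [hσ a b]
    rw [heq]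
    nlinarith [pow_le_pow_left₀ (norm_nonneg _) (hΛ a b) 2]
  have hgσ : ∀ z, HasGradientAt (fun z => g z - σ / 2 * ‖z‖ ^ 2) (g' z - σ • z) z := fun z => by
    rw [hasGradientAt_iff_hasFDerivAt]
    refine ((hg z).hasFDerivAt.sub
      ((hasStrictFDerivAt_norm_sq z).hasFDerivAt.const_mul (σ / 2))).congr_fderiv ?_
    ext w
    simp [real_inner_comm]
    ring
  have hinner : ∀ a b : F, ⟪(g' a - σ • a) - (g' b - σ • b), a - b⟫_ℝ
      = ⟪g' a - g' b, a - b⟫_ℝ - σ * ‖a - b‖ ^ 2 := fun a b => by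
    rw [sub_sub_sub_comm, ← smul_sub, inner_sub_left, real_inner_smul_left,
      real_inner_self_eq_norm_sq]
  have key := norm_sub_sq_le_mul_inner_sub hgσ (sub_pos.2 hlt)
    (fun a b => by rw [hinner]; linarith [hσ a b])
    (fun a b => by
      rw [hinner]
      nlinarith [real_inner_le_norm (g' a - g' b) (a - b), hΛ a b, norm_nonneg (a - b)]) a b
  rw [hinner, sub_sub_sub_comm, ← smul_sub, norm_sub_sq_real, real_inner_smul_right, norm_smul,
    Real.norm_eq_abs, mul_pow, sq_abs] at key
  nlinarith

theorem norm_sub_smul_sub_le (hg : ∀ z, HasGradientAt g (g' z) z) {σ Λ β : ℝ}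
    (hσ0 : 0 < σ) (hσΛ : σ ≤ Λ) (hσ : ∀ a b, σ * ‖a - b‖ ^ 2 ≤ ⟪g' a - g' b, a - b⟫_ℝ)
    (hΛ : ∀ a b, ‖g' a - g' b‖ ≤ Λ * ‖a - b‖) (hβ0 : 0 ≤ β) (hβ : β * (σ + Λ) ≤ 2) (a b : F) :
    ‖(a - β • g' a) - (b - β • g' b)‖ ≤ (1 - β * σ) * ‖a - b‖ := by
  have key := norm_sq_add_mul_mul_le_inner_sub hg hσΛ hσ hΛ a b
  have hlow : σ * ‖a - b‖ ≤ ‖g' a - g' b‖ := by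
    rcases (norm_nonneg (a - b)).eq_or_lt with h0 | hpos
    · rw [← h0, mul_zero]; exact norm_nonneg _
    · refine le_of_mul_le_mul_right ?_ hpos
      nlinarith [hσ a b, real_inner_le_norm (g' a - g' b) (a - b)]
  have hβσ : β * σ ≤ 1 := by nlinarith
  rw [sub_sub_sub_comm, ← smul_sub]
  refine le_of_sq_le_sq ?_ (mul_nonneg (by linarith) (norm_nonneg _))
  rw [norm_sub_sq_real, real_inner_smul_right, norm_smul, Real.norm_eq_abs, mul_pow, sq_abs,
    real_inner_comm]
  nlinarith [mul_nonneg hβ0 (sub_nonneg.2 hβ), mul_le_mul_of_nonneg_left hlow hσ0.le,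
    mul_nonneg (mul_nonneg hβ0 (sub_nonneg.2 hβ))
      (sub_nonneg.2 (pow_le_pow_left₀ (by positivity) hlow 2))]

theorem IsLocalMin.hasGradientAt_eq_zero {f : F → ℝ} {a f' : F} (h : IsLocalMin f a)
    (hf : HasGradientAt f f' a) : f' = 0 := by
  simpa using h.hasFDerivAt_eq_zero hf.hasFDerivAt

theorem HasGradientAt.sum {ι : Type*} (s : Finset ι) {f : ι → F → ℝ} {f' : ι → F} {z : F}
    (h : ∀ i ∈ s, HasGradientAt (f i) (f' i) z) :
    HasGradientAt (fun w => ∑ i ∈ s, f i w) (∑ i ∈ s, f' i) z := by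
  rw [hasGradientAt_iff_hasFDerivAt, map_sum]
  exact HasFDerivAt.fun_sum fun i hi => (h i hi).hasFDerivAt

theorem norm_average_gradient_step_sub_le {ι : Type*} [Fintype ι] [Nonempty ι]
    {f : ι → F → ℝ} {G : ι → F → F} (hgrad : ∀ i z, HasGradientAt (f i) (G i z) z)
    {μ L η : ℝ} (hμ : 0 < μ) (hμL : μ ≤ L)
    (hsc : ∀ i a b, μ * ‖a - b‖ ^ 2 ≤ ⟪G i a - G i b, a - b⟫_ℝ)
    (hlip : ∀ i a b, ‖G i a - G i b‖ ≤ L * ‖a - b‖) (hη : 0 ≤ η) (hstep : η ≤ 2 / (μ + L))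
    (a b : F) :
    ‖(a - (η / Fintype.card ι) • ∑ i, G i a) - (b - (η / Fintype.card ι) • ∑ i, G i b)‖
      ≤ (1 - η * μ) * ‖a - b‖ := by
  set n : ℝ := (Fintype.card ι : ℝ)
  have hn : 0 < n := by positivity
  have hsub : ∀ a b, ∑ i, G i a - ∑ i, G i b = ∑ i, (G i a - G i b) := fun a b =>
    (Finset.sum_sub_distrib ..).symm
  have h := norm_sub_smul_sub_le (g := fun w => ∑ i, f i w) (g' := fun w => ∑ i, G i w)
    (fun z => HasGradientAt.sum _ fun i _ => hgrad i z) (σ := n * μ) (Λ := n * L)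
    (β := η / n) (by positivity) (by gcongr)
    (fun a b => by
      rw [hsub, sum_inner]
      have h := Finset.sum_le_sum fun i (_ : i ∈ Finset.univ) => hsc i a b
      rw [Finset.sum_const, Finset.card_univ, nsmul_eq_mul] at h
      linarith)
    (fun a b => by
      rw [hsub]
      refine (norm_sum_le _ _).trans ?_
      have h := Finset.sum_le_sum fun i (_ : i ∈ Finset.univ) => hlip i a b
      rw [Finset.sum_const, Finset.card_univ, nsmul_eq_mul] at h
      linarith)
    (by positivity)
    (by rw [le_div_iff₀ (by linarith)] at hstep; field_simp; linarith) a b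
  have hημ : η / n * (n * μ) = η * μ := by field_simp
  rwa [hημ] at h

end Gradient

theorem norm_sum_le_sqrt_mul_sqrt {ι E : Type*} [SeminormedAddCommGroup E] (s : Finset ι)
    {w : ι → E} {c r : ι → ℝ} (h : ∀ i ∈ s, ‖w i‖ ≤ c i * r i) :
    ‖∑ i ∈ s, w i‖ ≤ √(∑ i ∈ s, c i ^ 2) * √(∑ i ∈ s, r i ^ 2) :=
  (norm_sum_le _ _).trans ((Finset.sum_le_sum h).trans (Real.sum_mul_le_sqrt_mul_sqrt _ _ _))

theorem sub_inv_smul_sum_sub_eq {E ι : Type*} [AddCommGroup E] [Module ℝ E] (s : Finset ι)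
    {k η : ℝ} (hk : k ≠ 0) {xb xs yb : E} {Y g G : ι → E} {c v : ι → ℝ}
    (hyb : yb = k⁻¹ • ∑ i ∈ s, g i) (hcv : ∑ i ∈ s, c i * v i = k * η) :
    (xb - k⁻¹ • ∑ i ∈ s, c i • Y i) - xs =
      ((xb - (η / k) • ∑ i ∈ s, G i) - xs) + (η / k) • ∑ i ∈ s, (G i - g i)
        - k⁻¹ • ∑ i ∈ s, c i • (Y i - v i • yb) := by
  have hcvy : ∑ i ∈ s, c i • (Y i - v i • yb) = ∑ i ∈ s, c i • Y i - (k * η) • yb := by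
    simp only [smul_sub, smul_smul, Finset.sum_sub_distrib, ← Finset.sum_smul, hcv]
  rw [hcvy, hyb, Finset.sum_sub_distrib]
  match_scalars <;> field_simp <;> ring

theorem vecMul_mul_sub_diagonal_mul {m n : Type*} [Fintype m] [DecidableEq m]
    {u α : m → ℝ} {R : Matrix m m ℝ} (huR : vecMul u R = u) (x y : Matrix m n ℝ) :
    vecMul u (R * (x - diagonal α * y)) = vecMul u x - vecMul (fun i => u i * α i) y := by
  rw [← vecMul_vecMul, huR, vecMul_sub, ← vecMul_vecMul,
    show vecMul u (diagonal α) = fun i => u i * α i from funext (vecMul_diagonal u α)]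

theorem toLp_vecMul {m n : Type*} [Fintype m] (w : m → ℝ) (M : Matrix m n ℝ) :
    WithLp.toLp 2 (vecMul w M) = ∑ i, w i • WithLp.toLp 2 (M i) := by
  simp [vecMul_eq_sum]

theorem toLp_vecMul_one_eq_sum_of_tracking {n p : ℕ}
    {G : Fin n → EuclideanSpace ℝ (Fin p) → EuclideanSpace ℝ (Fin p)}
    {x y : Matrix (Fin n) (Fin p) ℝ}
    (htrack : ∀ c, ∑ i, y i c = ∑ i, gradF G x i c) :
    WithLp.toLp 2 (vecMul (fun _ => 1) y) = ∑ i, G i (WithLp.toLp 2 (x i)) := by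
  have hsum : vecMul (fun _ => 1) y = vecMul (fun _ => 1) (gradF G x) :=
    funext fun c => by simpa [vecMul, dotProduct] using htrack c
  rw [hsum, toLp_vecMul]
  simp only [one_smul]
  rfl

theorem e2_eq_norm_toLp {p : ℕ} (a : Fin p → ℝ) : e2 a = ‖WithLp.toLp 2 a‖ := by
  simp [e2, EuclideanSpace.norm_eq]

theorem sqrt_sum_norm_toLp_sq_le_colNorm {n p : ℕ} {N : (Fin n → ℝ) → ℝ}
    (hN : ∀ z, e2 z ≤ N z) (M : Matrix (Fin n) (Fin p) ℝ) :
    √(∑ i, ‖WithLp.toLp 2 (M i)‖ ^ 2) ≤ colNorm N M := by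
  refine Real.sqrt_le_sqrt ?_
  calc ∑ i, ‖WithLp.toLp 2 (M i)‖ ^ 2 = ∑ c, e2 (fun i => M i c) ^ 2 := by
        simp only [← e2_eq_norm_toLp, e2, Real.sq_sqrt (Finset.sum_nonneg fun _ _ => sq_nonneg _)]
        exact Finset.sum_comm
    _ ≤ ∑ c, N (fun i => M i c) ^ 2 :=
        Finset.sum_le_sum fun c _ => pow_le_pow_left₀ (Real.sqrt_nonneg _) (hN _) 2

theorem norm_smul_sum_sub_le_colNorm {n p : ℕ} {E : Type*} [SeminormedAddCommGroup E]
    [NormedSpace ℝ E] {G : Fin n → EuclideanSpace ℝ (Fin p) → E} {L η : ℝ} (hL : 0 ≤ L)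
    (hη : 0 ≤ η) (hlip : ∀ i a b, ‖G i a - G i b‖ ≤ L * ‖a - b‖) {N : (Fin n → ℝ) → ℝ}
    (hN : ∀ z, e2 z ≤ N z) (x : Matrix (Fin n) (Fin p) ℝ) (xbar : Fin p → ℝ) :
    ‖(η / n) • ∑ i, (G i (WithLp.toLp 2 xbar) - G i (WithLp.toLp 2 (x i)))‖
      ≤ η * L / √n * colNorm N (x - of fun _ c => xbar c) := by
  have h := norm_sum_le_sqrt_mul_sqrt Finset.univ
    (w := fun i => G i (WithLp.toLp 2 xbar) - G i (WithLp.toLp 2 (x i))) (c := fun _ => L)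
    (r := fun i => ‖WithLp.toLp 2 ((x - of fun _ c => xbar c : Matrix (Fin n) (Fin p) ℝ) i)‖)
    fun i _ => by
      rw [show (x - of fun _ c => xbar c : Matrix (Fin n) (Fin p) ℝ) i = (x i - xbar : Fin p → ℝ)
        from rfl, WithLp.toLp_sub, norm_sub_rev]
      exact hlip i _ _
  rw [Finset.sum_const, Finset.card_univ, Fintype.card_fin, nsmul_eq_mul, Real.sqrt_mul',
    Real.sqrt_sq hL, mul_comm √_ L] at h
  · rw [norm_smul, Real.norm_eq_abs, abs_of_nonneg (by positivity)]
    calc η / n * ‖∑ i, (G i (WithLp.toLp 2 xbar) - G i (WithLp.toLp 2 (x i)))‖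
        ≤ η / n * (L * √n * colNorm N (x - of fun _ c => xbar c)) := by
          grw [h, sqrt_sum_norm_toLp_sq_le_colNorm hN]
      _ = η * L * (√n / n) * colNorm N (x - of fun _ c => xbar c) := by ring
      _ = η * L / √n * colNorm N (x - of fun _ c => xbar c) := by
          rw [Real.sqrt_div_self']
          ring
  · positivity

theorem norm_inv_smul_sum_smul_sub_le_colNorm {n p : ℕ} {u α v : Fin n → ℝ} {abar : ℝ}
    (hu : ∀ i, 0 ≤ u i) (hα : ∀ i, 0 ≤ α i) (habar₁ : ∀ i, α i ≤ abar) (habar : 0 ≤ abar)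
    {N : (Fin n → ℝ) → ℝ} (hN : ∀ z, e2 z ≤ N z) (y : Matrix (Fin n) (Fin p) ℝ)
    (ybar : Fin p → ℝ) :
    ‖(n : ℝ)⁻¹ • ∑ i, (u i * α i) • (WithLp.toLp 2 (y i) - v i • WithLp.toLp 2 ybar)‖
      ≤ abar * e2 u / n * colNorm N (y - of fun i c => v i * ybar c) := by
  set M : Matrix (Fin n) (Fin p) ℝ := y - of fun i c => v i * ybar c
  have h := norm_sum_le_sqrt_mul_sqrt Finset.univ
    (w := fun i => (u i * α i) • WithLp.toLp 2 (M i)) (c := fun i => abar * u i)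
    (r := fun i => ‖WithLp.toLp 2 (M i)‖) fun i _ => by
      rw [norm_smul, Real.norm_eq_abs, abs_of_nonneg (mul_nonneg (hu i) (hα i)), mul_comm abar]
      gcongr
      · exact hu i
      · exact habar₁ i
  simp only [mul_pow, ← Finset.mul_sum, Real.sqrt_sq habar,
    Real.sqrt_mul' _ (Finset.sum_nonneg fun i _ => sq_nonneg (u i))] at h
  rw [norm_smul, Real.norm_eq_abs, abs_of_nonneg (by positivity)]
  calc (n : ℝ)⁻¹ * ‖∑ i, (u i * α i) • WithLp.toLp 2 (M i)‖
      ≤ (n : ℝ)⁻¹ * (abar * e2 u * colNorm N M) := by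
        grw [h, sqrt_sum_norm_toLp_sq_le_colNorm hN]
        rfl
    _ = abar * e2 u / n * colNorm N M := by ring

theorem push_pull_optimality_gap_bound_general {n p : ℕ} (hn : 0 < n)
    (f : Fin n → EuclideanSpace ℝ (Fin p) → ℝ)
    (G : Fin n → EuclideanSpace ℝ (Fin p) → EuclideanSpace ℝ (Fin p))
    (hgrad : ∀ i z, HasGradientAt (f i) (G i z) z)
    (μ L : ℝ) (hμ : 0 < μ) (hμL : μ ≤ L)
    (hsc : ∀ i (a b : EuclideanSpace ℝ (Fin p)),
      μ * ‖a - b‖ ^ 2 ≤ (inner ℝ (G i a - G i b) (a - b) : ℝ))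
    (hlip : ∀ i (a b : EuclideanSpace ℝ (Fin p)), ‖G i a - G i b‖ ≤ L * ‖a - b‖)
    (xstar : EuclideanSpace ℝ (Fin p))
    (hmin : ∀ z, ∑ i, f i xstar ≤ ∑ i, f i z)
    (R : Matrix (Fin n) (Fin n) ℝ)
    (u : Fin n → ℝ) (hu : ∀ i, 0 ≤ u i) (huR : Matrix.vecMul u R = u)
    (v : Fin n → ℝ) (hv : ∀ i, 0 ≤ v i)
    (α : Fin n → ℝ) (hα : ∀ i, 0 ≤ α i)
    (abar : ℝ) (habar₁ : ∀ i, α i ≤ abar)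
    (αp : ℝ) (hαp : αp = (∑ i, u i * (α i * v i)) / n)
    (NR NC : (Fin n → ℝ) → ℝ)
    (hNR2 : ∀ z, e2 z ≤ NR z) (hNC2 : ∀ z, e2 z ≤ NC z)
    (x y : Matrix (Fin n) (Fin p) ℝ)
    (htrack : ∀ c, ∑ i, y i c = ∑ i, gradF G x i c)
    (xbar : Fin p → ℝ) (hxbar : xbar = (n : ℝ)⁻¹ • Matrix.vecMul u x)
    (ybar : Fin p → ℝ) (hybar : ybar = (n : ℝ)⁻¹ • Matrix.vecMul (fun _ => (1 : ℝ)) y)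
    (xplus : Matrix (Fin n) (Fin p) ℝ) (hxplus : xplus = R * (x - Matrix.diagonal α * y))
    (xbarplus : Fin p → ℝ) (hxbarplus : xbarplus = (n : ℝ)⁻¹ • Matrix.vecMul u xplus)
    (hstep : αp ≤ 2 / (μ + L)) :
    e2 (xbarplus - (fun c => xstar c)) ≤
      (1 - αp * μ) * e2 (xbar - (fun c => xstar c)) +
      (αp * L / Real.sqrt n) * colNorm NR (x - Matrix.of fun _ c => xbar c) +
      (abar * e2 u / n) * colNorm NC (y - Matrix.of fun i c => v i * ybar c) := by
  have hn0 : (n : ℝ) ≠ 0 := by positivity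
  have : Nonempty (Fin n) := ⟨⟨0, hn⟩⟩
  have hαp0 : 0 ≤ αp := hαp ▸ div_nonneg
    (Finset.sum_nonneg fun i _ => mul_nonneg (hu i) (mul_nonneg (hα i) (hv i))) n.cast_nonneg
  have hcv : ∑ i, u i * α i * v i = n * αp := by
    simp only [hαp, mul_div_cancel₀ _ hn0, mul_assoc]
  have hG0 : ∑ i, G i xstar = 0 := IsLocalMin.hasGradientAt_eq_zero
    (Filter.Eventually.of_forall hmin) (HasGradientAt.sum _ fun i _ => hgrad i xstar)
  have hyb : WithLp.toLp 2 ybar = (n : ℝ)⁻¹ • ∑ i, G i (WithLp.toLp 2 (x i)) := by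
    rw [hybar, WithLp.toLp_smul, toLp_vecMul_one_eq_sum_of_tracking htrack]
  rw [e2_eq_norm_toLp, e2_eq_norm_toLp, hxbarplus, hxplus, vecMul_mul_sub_diagonal_mul huR,
    smul_sub, ← hxbar, WithLp.toLp_sub, WithLp.toLp_sub, WithLp.toLp_sub, WithLp.toLp_smul,
    toLp_vecMul, show WithLp.toLp 2 (fun c => xstar c) = xstar from rfl,
    sub_inv_smul_sum_sub_eq Finset.univ hn0 (G := fun i => G i (WithLp.toLp 2 xbar)) hyb hcv]
  refine (norm_sub_le _ _).trans ((add_le_add_left (norm_add_le _ _) _).trans ?_)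
  gcongr ?_ + ?_ + ?_
  · have h := norm_average_gradient_step_sub_le hgrad hμ hμL hsc hlip hαp0 hstep
      (WithLp.toLp 2 xbar) xstar
    rwa [hG0, smul_zero, sub_zero, Fintype.card_fin] at h
  · exact norm_smul_sum_sub_le_colNorm (hμ.le.trans hμL) hαp0 hlip hNR2 x xbar
  · exact norm_inv_smul_sum_smul_sub_le_colNorm hu hα habar₁
      ((hα ⟨0, hn⟩).trans (habar₁ _)) hNC2 y ybar

/-- One-step bound on the optimality gap of the weighted average iterate. -/
theorem push_pull_optimality_gap_bound {n p : ℕ} (hn : 0 < n)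
    (f : Fin n → EuclideanSpace ℝ (Fin p) → ℝ)
    (G : Fin n → EuclideanSpace ℝ (Fin p) → EuclideanSpace ℝ (Fin p))
    (hgrad : ∀ i z, HasGradientAt (f i) (G i z) z)
    (μ L : ℝ) (hμ : 0 < μ) (hμL : μ ≤ L)
    (hsc : ∀ i (a b : EuclideanSpace ℝ (Fin p)),
      μ * ‖a - b‖ ^ 2 ≤ (inner ℝ (G i a - G i b) (a - b) : ℝ))
    (hlip : ∀ i (a b : EuclideanSpace ℝ (Fin p)), ‖G i a - G i b‖ ≤ L * ‖a - b‖)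
    (xstar : EuclideanSpace ℝ (Fin p))
    (hmin : ∀ z, ∑ i, f i xstar ≤ ∑ i, f i z)
    (R : Matrix (Fin n) (Fin n) ℝ)
    (hRnonneg : ∀ i j, 0 ≤ R i j) (hRrow : ∀ i, ∑ j, R i j = 1)
    (u : Fin n → ℝ) (hu : ∀ i, 0 ≤ u i) (huR : Matrix.vecMul u R = u) (husum : ∑ i, u i = n)
    (v : Fin n → ℝ) (hv : ∀ i, 0 ≤ v i) (hvsum : ∑ i, v i = n)
    (α : Fin n → ℝ) (hα : ∀ i, 0 ≤ α i)
    (abar : ℝ) (habar₁ : ∀ i, α i ≤ abar) (habar₂ : ∃ i, α i = abar)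
    (αp : ℝ) (hαp : αp = (∑ i, u i * (α i * v i)) / n)
    (NR NC : (Fin n → ℝ) → ℝ) (hNR : IsNormOn NR) (hNC : IsNormOn NC)
    (hNR2 : ∀ z, e2 z ≤ NR z) (hNC2 : ∀ z, e2 z ≤ NC z)
    (x y : Matrix (Fin n) (Fin p) ℝ)
    (htrack : ∀ c, ∑ i, y i c = ∑ i, gradF G x i c)
    (xbar : Fin p → ℝ) (hxbar : xbar = (n : ℝ)⁻¹ • Matrix.vecMul u x)
    (ybar : Fin p → ℝ) (hybar : ybar = (n : ℝ)⁻¹ • Matrix.vecMul (fun _ => (1 : ℝ)) y)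
    (xplus : Matrix (Fin n) (Fin p) ℝ) (hxplus : xplus = R * (x - Matrix.diagonal α * y))
    (xbarplus : Fin p → ℝ) (hxbarplus : xbarplus = (n : ℝ)⁻¹ • Matrix.vecMul u xplus)
    (hstep : αp ≤ 2 / (μ + L)) :
    e2 (xbarplus - (fun c => xstar c)) ≤
      (1 - αp * μ) * e2 (xbar - (fun c => xstar c)) +
      (αp * L / Real.sqrt n) * colNorm NR (x - Matrix.of fun _ c => xbar c) +
      (abar * e2 u / n) * colNorm NC (y - Matrix.of fun i c => v i * ybar c) :=
  push_pull_optimality_gap_bound_general hn f G hgrad μ L hμ hμL hsc hlip xstar hmin R u hu huR v hv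
    α hα abar habar₁ αp hαp NR NC hNR2 hNC2 x y htrack xbar hxbar ybar hybar xplus hxplus xbarplus
    hxbarplus hstep
end

section
/- Let each f_i : ℝᵖ → ℝ be μ-strongly convex with L-Lipschitz continuous gradient and x* the unique minimizer of ∑_i f_i. Let R ∈ ℝ^{n×n} be row-stochastic, u ∈ ℝⁿ nonnegative with uᵀR = uᵀ and uᵀ𝟙 = n; let v ∈ ℝⁿ be nonnegative with 𝟙ᵀv = n. Let 𝛂 = diag(α_1,…,α_n) with α_i ≥ 0 and ᾱ := max_i α_i. Let N_R, N_C be norms on ℝⁿ, extended columnwise to ℝ^{n×p} as 𝒩_R, 𝒩_C, such that ‖z‖₂ ≤ N_R(z) for all z, N_R(𝛂z) ≤ ᾱ·N_R(z) for all z, and N_R(z) ≤ δ_{R,C}·N_C(z) for all z and some constant δ_{R,C} ≥ 0. Let σ_R := sup{N_R((R − 𝟙uᵀ/n)z) : N_R(z) ≤ 1}. Let x, y ∈ ℝ^{n×p} satisfy 𝟙ᵀy = 𝟙ᵀ∇F(x); set x̄ := (1/n)xᵀu, ȳ := (1/n)yᵀ𝟙, x⁺ := R(x − 𝛂y), x̄⁺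 := (1/n)(x⁺)ᵀu. Then 𝒩_R(x⁺ − 𝟙(x̄⁺)ᵀ) ≤ σ_R(1 + ᾱ·N_R(v)·L/√n)·𝒩_R(x − 𝟙x̄ᵀ) + ᾱσ_R δ_{R,C}·𝒩_C(y − vȳᵀ) + ᾱσ_R·N_R(v)·L·‖x̄ − x*‖₂. -/
/-!
With `W = R - 𝟙uᵀ/n`, the identity `uᵀR = uᵀ` gives `x⁺ - 𝟙(x̄⁺)ᵀ = W(x - 𝛂y)`, and `W`
annihilates matrices with constant columns because `R𝟙 = 𝟙` and `uᵀ𝟙 = n`. Splitting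
`x - 𝛂y = (x - 𝟙x̄ᵀ) + 𝟙x̄ᵀ - 𝛂(y - vȳᵀ) - 𝛂vȳᵀ`, the three surviving terms are bounded column by
column through `σ_R` and `ᾱ`. Gradient tracking makes `ȳ` the mean of the `∇f_i(x_i)`; since
`∑ ∇f_i(x*) = 0`, Lipschitz continuity and Cauchy–Schwarz give
`‖ȳ‖ ≤ (L/√n)‖x - 𝟙x̄ᵀ‖_F + L‖x̄ - x*‖`, and `‖·‖₂ ≤ N_R` bounds the Frobenius norm by `𝒩_R`.
-/

open Matrix

/-- The matrix norm induced by a norm `N` on `ℝⁿ`: `sup {N(Wz) : N(z) ≤ 1}`. -/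
noncomputable def inducedNorm {n : ℕ} (N : (Fin n → ℝ) → ℝ)
    (W : Matrix (Fin n) (Fin n) ℝ) : ℝ :=
  sSup {r : ℝ | ∃ z : Fin n → ℝ, N z ≤ 1 ∧ r = N (W.mulVec z)}

section Euclidean

variable {p : ℕ}

lemma e2_eq_norm (a : Fin p → ℝ) : e2 a = ‖WithLp.toLp 2 a‖ := by
  simp [e2, EuclideanSpace.norm_eq]

lemma abs_le_e2 (a : Fin p → ℝ) (c : Fin p) : |a c| ≤ e2 a :=
  Real.abs_le_sqrt (Finset.single_le_sum (fun i _ => sq_nonneg (a i)) (Finset.mem_univ c))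

lemma e2_le_e2 {s t : Fin p → ℝ} (hs : ∀ c, 0 ≤ s c) (hst : ∀ c, s c ≤ t c) : e2 s ≤ e2 t :=
  Real.sqrt_le_sqrt (Finset.sum_le_sum fun c _ => pow_le_pow_left₀ (hs c) (hst c) 2)

lemma e2_add_le (s t : Fin p → ℝ) : e2 (s + t) ≤ e2 s + e2 t := by
  simpa only [e2_eq_norm, WithLp.toLp_add] using norm_add_le _ _

lemma e2_smul (k : ℝ) (t : Fin p → ℝ) : e2 (k • t) = |k| * e2 t := by
  rw [e2_eq_norm, e2_eq_norm, WithLp.toLp_smul, norm_smul, Real.norm_eq_abs]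

lemma e2_abs (t : Fin p → ℝ) : e2 (fun c => |t c|) = e2 t := by
  simp [e2]

end Euclidean

namespace IsNormOn

variable {n : ℕ} {N : (Fin n → ℝ) → ℝ}

lemma nonneg (hN : IsNormOn N) (z : Fin n → ℝ) : 0 ≤ N z := hN.1 z

lemma map_zero (hN : IsNormOn N) : N 0 = 0 := (hN.2.1 0).2 rfl

lemma map_smul (hN : IsNormOn N) (c : ℝ) (z : Fin n → ℝ) : N (c • z) = |c| * N z := hN.2.2.1 c z

lemma add_le (hN : IsNormOn N) (z w : Fin n → ℝ) : N (z + w) ≤ N z + N w := hN.2.2.2 z w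

lemma sub_le (hN : IsNormOn N) (z w : Fin n → ℝ) : N (z - w) ≤ N z + N w := by
  calc N (z - w) = N (z + (-1 : ℝ) • w) := by rw [neg_one_smul, ← sub_eq_add_neg]
    _ ≤ N z + N ((-1 : ℝ) • w) := hN.add_le _ _
    _ = N z + N w := by rw [hN.map_smul, abs_neg, abs_one, one_mul]

lemma sum_le (hN : IsNormOn N) {ι : Type*} (s : Finset ι) (w : ι → Fin n → ℝ) :
    N (∑ i ∈ s, w i) ≤ ∑ i ∈ s, N (w i) :=
  Finset.le_sum_of_subadditive N hN.map_zero.le hN.add_le s w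

lemma mulVec_le_mul_e2 (hN : IsNormOn N) (W : Matrix (Fin n) (Fin n) ℝ) (z : Fin n → ℝ) :
    N (W *ᵥ z) ≤ (∑ j : Fin n, N (W *ᵥ Pi.single j 1)) * e2 z := by
  classical
  have hz : W *ᵥ z = ∑ j, z j • W *ᵥ Pi.single j 1 := by
    conv_lhs => rw [pi_eq_sum_univ' z]
    simp only [mulVec_sum, mulVec_smul]
  calc N (W *ᵥ z) ≤ ∑ j, |z j| * N (W *ᵥ Pi.single j 1) := by
        rw [hz]
        simpa only [hN.map_smul] using
          hN.sum_le Finset.univ (fun j => z j • W *ᵥ Pi.single j 1)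
    _ ≤ ∑ j, e2 z * N (W *ᵥ Pi.single j 1) :=
        Finset.sum_le_sum fun j _ => mul_le_mul_of_nonneg_right (abs_le_e2 z j) (hN.nonneg _)
    _ = (∑ j : Fin n, N (W *ᵥ Pi.single j 1)) * e2 z := by rw [Finset.sum_mul]; simp only [mul_comm]

variable (hN : IsNormOn N) (hN2 : ∀ z, e2 z ≤ N z) (W : Matrix (Fin n) (Fin n) ℝ)
include hN hN2

lemma bddAbove_mulVec : BddAbove {r : ℝ | ∃ z : Fin n → ℝ, N z ≤ 1 ∧ r = N (W *ᵥ z)} := by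
  refine ⟨∑ j : Fin n, N (W *ᵥ Pi.single j 1), ?_⟩
  rintro _ ⟨z, hz, rfl⟩
  calc N (W *ᵥ z) ≤ (∑ j : Fin n, N (W *ᵥ Pi.single j 1)) * e2 z := hN.mulVec_le_mul_e2 W z
    _ ≤ (∑ j : Fin n, N (W *ᵥ Pi.single j 1)) * 1 :=
        mul_le_mul_of_nonneg_left ((hN2 z).trans hz) (Finset.sum_nonneg fun j _ => hN.nonneg _)
    _ = _ := mul_one _

lemma inducedNorm_nonneg : 0 ≤ inducedNorm N W :=
  le_csSup (hN.bddAbove_mulVec hN2 W) ⟨0, by simp [hN.map_zero], by simp [hN.map_zero]⟩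

lemma le_inducedNorm_mul (z : Fin n → ℝ) : N (W *ᵥ z) ≤ inducedNorm N W * N z := by
  rcases (hN.nonneg z).eq_or_lt with hz | hz
  · have : z = 0 := (hN.2.1 z).1 hz.symm
    simp [this, hN.map_zero]
  · have hmem : N (W *ᵥ ((N z)⁻¹ • z)) ≤ inducedNorm N W :=
      le_csSup (hN.bddAbove_mulVec hN2 W)
        ⟨(N z)⁻¹ • z, by rw [hN.map_smul, abs_of_pos (inv_pos.2 hz), inv_mul_cancel₀ hz.ne'], rfl⟩
    rw [mulVec_smul, hN.map_smul, abs_of_pos (inv_pos.2 hz), inv_mul_le_iff₀ hz] at hmem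
    linarith

end IsNormOn

section ColNorm

variable {n p : ℕ}

lemma colNorm_eq_e2 (N : (Fin n → ℝ) → ℝ) (X : Matrix (Fin n) (Fin p) ℝ) :
    colNorm N X = e2 (fun c => N (fun i => X i c)) := rfl

lemma colNorm_sub_le {N : (Fin n → ℝ) → ℝ} (hN : IsNormOn N) (A B : Matrix (Fin n) (Fin p) ℝ) :
    colNorm N (A - B) ≤ colNorm N A + colNorm N B := by
  simp only [colNorm_eq_e2]
  refine (e2_le_e2 (fun c => hN.nonneg _) fun c => hN.sub_le _ _).trans ?_
  exact e2_add_le (fun c => N (fun i => A i c)) (fun c => N (fun i => B i c))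

lemma colNorm_sub_sub_le {N : (Fin n → ℝ) → ℝ} (hN : IsNormOn N)
    (A B C : Matrix (Fin n) (Fin p) ℝ) :
    colNorm N (A - B - C) ≤ colNorm N A + colNorm N B + colNorm N C :=
  (colNorm_sub_le hN _ _).trans (add_le_add_left (colNorm_sub_le hN _ _) _)

lemma colNorm_mul_le {N₁ N₂ : (Fin n → ℝ) → ℝ} (hN₁ : ∀ z, 0 ≤ N₁ z) {k : ℝ} (hk : 0 ≤ k)
    {P : Matrix (Fin n) (Fin n) ℝ} (hP : ∀ z, N₁ (P *ᵥ z) ≤ k * N₂ z)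
    (X : Matrix (Fin n) (Fin p) ℝ) :
    colNorm N₁ (P * X) ≤ k * colNorm N₂ X := by
  have hcol : ∀ c, (fun i => (P * X) i c) = P *ᵥ fun i => X i c := fun c => by
    ext i; simp [mul_apply, mulVec, dotProduct]
  simp only [colNorm_eq_e2, hcol]
  calc e2 (fun c => N₁ (P *ᵥ fun i => X i c)) ≤ e2 (k • fun c => N₂ (fun i => X i c)) :=
        e2_le_e2 (fun c => hN₁ _) fun c => hP _
    _ = k * e2 (fun c => N₂ (fun i => X i c)) := by rw [e2_smul, abs_of_nonneg hk]

lemma colNorm_of_mul {N : (Fin n → ℝ) → ℝ} (hN : IsNormOn N) (v : Fin n → ℝ) (t : Fin p → ℝ) :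
    colNorm N (of fun i c => v i * t c) = N v * e2 t := by
  have hcol : ∀ c, N (fun i => of (fun i c => v i * t c) i c) = N v * |t c| := fun c => by
    rw [mul_comm, ← hN.map_smul]
    congr 1
    ext i
    simp [mul_comm]
  rw [colNorm_eq_e2, funext hcol]
  change e2 (N v • fun c => |t c|) = _
  rw [e2_smul, abs_of_nonneg (hN.nonneg v), e2_abs]

lemma sum_e2_le_sqrt_mul_colNorm {N : (Fin n → ℝ) → ℝ} (hN2 : ∀ z, e2 z ≤ N z)
    (X : Matrix (Fin n) (Fin p) ℝ) : ∑ i, e2 (X i) ≤ √n * colNorm N X := by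
  have hfrob : ∑ i, e2 (X i) ^ 2 ≤ colNorm N X ^ 2 := by
    calc ∑ i, e2 (X i) ^ 2 = ∑ c, e2 (fun i => X i c) ^ 2 := by
          simp only [e2, Real.sq_sqrt (Finset.sum_nonneg fun _ _ => sq_nonneg _)]
          exact Finset.sum_comm
      _ ≤ ∑ c, N (fun i => X i c) ^ 2 := Finset.sum_le_sum fun c _ =>
          pow_le_pow_left₀ (Real.sqrt_nonneg _) (hN2 _) 2
      _ = colNorm N X ^ 2 := by
          rw [colNorm, Real.sq_sqrt (Finset.sum_nonneg fun _ _ => sq_nonneg _)]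
  have hcs := sq_sum_le_card_mul_sum_sq (s := Finset.univ) (f := fun i => e2 (X i))
  rw [Finset.card_univ, Fintype.card_fin] at hcs
  refine abs_le_of_sq_le_sq' ?_ (mul_nonneg (Real.sqrt_nonneg _) (Real.sqrt_nonneg _)) |>.2
  rw [mul_pow, Real.sq_sqrt (Nat.cast_nonneg n)]
  exact hcs.trans (mul_le_mul_of_nonneg_left hfrob (Nat.cast_nonneg n))

end ColNorm

section Consensus

variable {n p : ℕ} {R : Matrix (Fin n) (Fin n) ℝ} {u : Fin n → ℝ}

lemma mul_sub_weighted_mean (huR : vecMul u R = u) (X : Matrix (Fin n) (Fin p) ℝ) :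
    R * X - of (fun _ c => ((n : ℝ)⁻¹ • vecMul u (R * X)) c) =
      (R - of fun _ j => u j / n) * X := by
  rw [← vecMul_vecMul, huR]
  ext i c
  simp [sub_mul, mul_apply, vecMul, dotProduct, Finset.mul_sum, div_eq_inv_mul, mul_assoc]

lemma sub_weighted_mean_mul_const (hRrow : ∀ i, ∑ j, R i j = 1) (husum : ∑ i, u i = n)
    (hn : n ≠ 0) (a : Fin p → ℝ) :
    (R - of fun _ j => u j / n) * (of fun _ c => a c : Matrix (Fin n) (Fin p) ℝ) = 0 := by
  ext i c
  simp [sub_mul, mul_apply, ← Finset.sum_mul, hRrow, ← Finset.sum_div, husum, hn]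

lemma mul_sub_weighted_mean_eq (hRrow : ∀ i, ∑ j, R i j = 1) (huR : vecMul u R = u)
    (husum : ∑ i, u i = n) (hn : n ≠ 0) (D : Matrix (Fin n) (Fin n) ℝ)
    (x y V : Matrix (Fin n) (Fin p) ℝ) (xbar : Fin p → ℝ) :
    R * (x - D * y) - of (fun _ c => ((n : ℝ)⁻¹ • vecMul u (R * (x - D * y))) c) =
      (R - of fun _ j => u j / n) * (x - of fun _ c => xbar c) -
        (R - of fun _ j => u j / n) * D * (y - V) - (R - of fun _ j => u j / n) * D * V := by
  have hsplit : x - D * y = (x - of fun _ c => xbar c) + of (fun _ c => xbar c) - D * (y - V) -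
      D * V := by
    rw [Matrix.mul_sub]; abel
  rw [mul_sub_weighted_mean huR, hsplit, Matrix.mul_sub, Matrix.mul_sub, Matrix.mul_add,
    sub_weighted_mean_mul_const hRrow husum hn, add_zero, Matrix.mul_assoc, Matrix.mul_assoc]

end Consensus

lemma sum_eq_zero_of_forall_sum_le {ι E : Type*} [NormedAddCommGroup E] [InnerProductSpace ℝ E]
    [CompleteSpace E] (s : Finset ι) (f : ι → E → ℝ) (g : ι → E) {x₀ : E}
    (hgrad : ∀ i ∈ s, HasGradientAt (f i) (g i) x₀)
    (hmin : ∀ z, ∑ i ∈ s, f i x₀ ≤ ∑ i ∈ s, f i z) :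
    ∑ i ∈ s, g i = 0 := by
  have hF : HasFDerivAt (fun z => ∑ i ∈ s, f i z)
      (∑ i ∈ s, InnerProductSpace.toDual ℝ E (g i)) x₀ :=
    HasFDerivAt.fun_sum fun i hi => (hgrad i hi).hasFDerivAt
  have h0 := IsLocalMin.hasFDerivAt_eq_zero (Filter.Eventually.of_forall hmin) hF
  rw [← map_sum] at h0
  exact (InnerProductSpace.toDual ℝ E).map_eq_zero_iff.1 h0

lemma norm_sum_le_of_lipschitz {ι E F : Type*} [SeminormedAddCommGroup E]
    [SeminormedAddCommGroup F] (s : Finset ι) (G : ι → E → F) {L : ℝ}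
    (hlip : ∀ i a b, ‖G i a - G i b‖ ≤ L * ‖a - b‖) {x₀ : E} (h₀ : ∑ i ∈ s, G i x₀ = 0)
    (a : ι → E) :
    ‖∑ i ∈ s, G i (a i)‖ ≤ L * ∑ i ∈ s, ‖a i - x₀‖ := by
  calc ‖∑ i ∈ s, G i (a i)‖ = ‖∑ i ∈ s, (G i (a i) - G i x₀)‖ := by
        rw [Finset.sum_sub_distrib, h₀, sub_zero]
    _ ≤ ∑ i ∈ s, ‖G i (a i) - G i x₀‖ := norm_sum_le _ _
    _ ≤ ∑ i ∈ s, L * ‖a i - x₀‖ := Finset.sum_le_sum fun i _ => hlip i _ _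
    _ = L * ∑ i ∈ s, ‖a i - x₀‖ := (Finset.mul_sum _ _ _).symm

lemma e2_mean_gradient_le {n p : ℕ} (hn : 0 < n)
    (G : Fin n → EuclideanSpace ℝ (Fin p) → EuclideanSpace ℝ (Fin p)) {L : ℝ} (hL : 0 ≤ L)
    (hlip : ∀ i a b, ‖G i a - G i b‖ ≤ L * ‖a - b‖) {xstar : EuclideanSpace ℝ (Fin p)}
    (h₀ : ∑ i, G i xstar = 0) {N : (Fin n → ℝ) → ℝ} (hN2 : ∀ z, e2 z ≤ N z)
    (x : Matrix (Fin n) (Fin p) ℝ) (xbar : Fin p → ℝ) :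
    e2 ((n : ℝ)⁻¹ • vecMul (fun _ => 1) (gradF G x)) ≤
      L / √n * colNorm N (x - of fun _ c => xbar c) + L * e2 (xbar - fun c => xstar c) := by
  have hmean : WithLp.toLp 2 ((n : ℝ)⁻¹ • vecMul (fun _ => 1) (gradF G x)) =
      (n : ℝ)⁻¹ • ∑ i, G i (WithLp.toLp 2 (x i)) := by
    ext c
    simp [vecMul, dotProduct, gradF]
  set X : Matrix (Fin n) (Fin p) ℝ := x - of fun _ c => xbar c
  set E := e2 (xbar - fun c => xstar c) with hEdef
  have hrow : ∀ i, ‖WithLp.toLp 2 (x i) - xstar‖ ≤ e2 (X i) + E := fun i => by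
    have hX : WithLp.toLp 2 (X i) = WithLp.toLp 2 (x i) - WithLp.toLp 2 xbar := rfl
    have hE : WithLp.toLp 2 (xbar - fun c => xstar c) = WithLp.toLp 2 xbar - xstar := rfl
    rw [hEdef, e2_eq_norm, e2_eq_norm, hX, hE]
    exact norm_sub_le_norm_sub_add_norm_sub _ _ _
  have hnpos : (0 : ℝ) < n := Nat.cast_pos.2 hn
  have hsqrt : √(n : ℝ) * √n = n := Real.mul_self_sqrt hnpos.le
  rw [e2_eq_norm, hmean, norm_smul, Real.norm_of_nonneg (inv_nonneg.2 hnpos.le)]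
  calc (n : ℝ)⁻¹ * ‖∑ i, G i (WithLp.toLp 2 (x i))‖
      ≤ (n : ℝ)⁻¹ * (L * ∑ i, (e2 (X i) + E)) := by
        gcongr
        exact (norm_sum_le_of_lipschitz _ G hlip h₀ _).trans
          (mul_le_mul_of_nonneg_left (Finset.sum_le_sum fun i _ => hrow i) hL)
    _ ≤ (n : ℝ)⁻¹ * (L * (√n * colNorm N X + n * E)) := by
        rw [Finset.sum_add_distrib, Finset.sum_const, Finset.card_univ, Fintype.card_fin,
          nsmul_eq_mul]
        gcongr
        exact sum_e2_le_sqrt_mul_colNorm hN2 X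
    _ = L / √n * colNorm N X + L * E := by
        field_simp
        linear_combination L * colNorm N X * hsqrt

theorem push_pull_consensus_error_bound_general {n p : ℕ} (hn : 0 < n)
    (f : Fin n → EuclideanSpace ℝ (Fin p) → ℝ)
    (G : Fin n → EuclideanSpace ℝ (Fin p) → EuclideanSpace ℝ (Fin p))
    (hgrad : ∀ i z, HasGradientAt (f i) (G i z) z)
    (μ L : ℝ) (hμ : 0 < μ) (hμL : μ ≤ L)
    (hlip : ∀ i (a b : EuclideanSpace ℝ (Fin p)), ‖G i a - G i b‖ ≤ L * ‖a - b‖)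
    (xstar : EuclideanSpace ℝ (Fin p))
    (hmin : ∀ z, ∑ i, f i xstar ≤ ∑ i, f i z)
    (R : Matrix (Fin n) (Fin n) ℝ)
    (hRrow : ∀ i, ∑ j, R i j = 1)
    (u : Fin n → ℝ) (huR : Matrix.vecMul u R = u) (husum : ∑ i, u i = n)
    (v : Fin n → ℝ)
    (α : Fin n → ℝ) (hα : ∀ i, 0 ≤ α i)
    (abar : ℝ) (habar₂ : ∃ i, α i = abar)
    (NR NC : (Fin n → ℝ) → ℝ) (hNR : IsNormOn NR)
    (hNR2 : ∀ z, e2 z ≤ NR z)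
    (hNRα : ∀ z, NR ((Matrix.diagonal α).mulVec z) ≤ abar * NR z)
    (δRC : ℝ) (hδRC : 0 ≤ δRC) (hNRC : ∀ z, NR z ≤ δRC * NC z)
    (σR : ℝ) (hσR : σR = inducedNorm NR (R - Matrix.of fun _ j => u j / n))
    (x y : Matrix (Fin n) (Fin p) ℝ)
    (htrack : ∀ c, ∑ i, y i c = ∑ i, gradF G x i c)
    (xbar : Fin p → ℝ)
    (ybar : Fin p → ℝ) (hybar : ybar = (n : ℝ)⁻¹ • Matrix.vecMul (fun _ => (1 : ℝ)) y)
    (xplus : Matrix (Fin n) (Fin p) ℝ) (hxplus : xplus = R * (x - Matrix.diagonal α * y))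
    (xbarplus : Fin p → ℝ) (hxbarplus : xbarplus = (n : ℝ)⁻¹ • Matrix.vecMul u xplus) :
    colNorm NR (xplus - Matrix.of fun _ c => xbarplus c) ≤
      σR * (1 + abar * NR v * L / Real.sqrt n) *
        colNorm NR (x - Matrix.of fun _ c => xbar c) +
      abar * σR * δRC * colNorm NC (y - Matrix.of fun i c => v i * ybar c) +
      abar * σR * NR v * L * e2 (xbar - (fun c => xstar c)) := by
  set W := R - Matrix.of fun _ j => u j / n
  set X := x - Matrix.of fun _ c => xbar c
  set V : Matrix (Fin n) (Fin p) ℝ := Matrix.of fun i c => v i * ybar c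
  set Y := y - V
  have habar : 0 ≤ abar := by obtain ⟨i, rfl⟩ := habar₂; exact hα i
  have hσ : 0 ≤ σR := hσR ▸ hNR.inducedNorm_nonneg hNR2 W
  have hWD : ∀ z, NR ((W * diagonal α) *ᵥ z) ≤ (σR * abar) * NR z := fun z => by
    rw [← mulVec_mulVec, mul_assoc]
    exact (hσR ▸ hNR.le_inducedNorm_mul hNR2 W _).trans
      (mul_le_mul_of_nonneg_left (hNRα z) hσ)
  have hdecomp : xplus - Matrix.of (fun _ c => xbarplus c) =
      W * X - W * diagonal α * Y - W * diagonal α * V := by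
    rw [hxbarplus, hxplus]
    exact mul_sub_weighted_mean_eq hRrow huR husum hn.ne' _ x y V xbar
  have hybar' : e2 ybar ≤ L / √n * colNorm NR X + L * e2 (xbar - fun c => xstar c) := by
    have hcol : vecMul (fun _ => (1 : ℝ)) y = vecMul (fun _ => 1) (gradF G x) := by
      ext c; simpa [vecMul, dotProduct] using htrack c
    rw [hybar, hcol]
    exact e2_mean_gradient_le hn G (hμ.le.trans hμL) hlip
      (sum_eq_zero_of_forall_sum_le _ f _ (fun i _ => hgrad i xstar) hmin) hNR2 x xbar
  calc colNorm NR (xplus - Matrix.of fun _ c => xbarplus c)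
      ≤ colNorm NR (W * X) + colNorm NR (W * diagonal α * Y) +
          colNorm NR (W * diagonal α * V) := by
        rw [hdecomp]; exact colNorm_sub_sub_le hNR _ _ _
    _ ≤ σR * colNorm NR X + σR * abar * δRC * colNorm NC Y + σR * abar * (NR v * e2 ybar) := by
        gcongr
        · exact colNorm_mul_le hNR.nonneg hσ (hσR ▸ hNR.le_inducedNorm_mul hNR2 W) X
        · refine colNorm_mul_le (N₂ := NC) hNR.nonneg (by positivity) (fun z => ?_) Y
          rw [mul_assoc _ δRC]
          exact (hWD z).trans (mul_le_mul_of_nonneg_left (hNRC z) (by positivity))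
        · rw [← colNorm_of_mul hNR]
          exact colNorm_mul_le hNR.nonneg (by positivity) hWD V
    _ ≤ _ := by
        linear_combination
          mul_le_mul_of_nonneg_left hybar' (mul_nonneg (mul_nonneg hσ habar) (hNR.nonneg v))

/-- One-step bound on the consensus error of the `x`-iterates. -/
theorem push_pull_consensus_error_bound {n p : ℕ} (hn : 0 < n)
    (f : Fin n → EuclideanSpace ℝ (Fin p) → ℝ)
    (G : Fin n → EuclideanSpace ℝ (Fin p) → EuclideanSpace ℝ (Fin p))
    (hgrad : ∀ i z, HasGradientAt (f i) (G i z) z)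
    (μ L : ℝ) (hμ : 0 < μ) (hμL : μ ≤ L)
    (hsc : ∀ i (a b : EuclideanSpace ℝ (Fin p)),
      μ * ‖a - b‖ ^ 2 ≤ (inner ℝ (G i a - G i b) (a - b) : ℝ))
    (hlip : ∀ i (a b : EuclideanSpace ℝ (Fin p)), ‖G i a - G i b‖ ≤ L * ‖a - b‖)
    (xstar : EuclideanSpace ℝ (Fin p))
    (hmin : ∀ z, ∑ i, f i xstar ≤ ∑ i, f i z)
    (R : Matrix (Fin n) (Fin n) ℝ)
    (hRnonneg : ∀ i j, 0 ≤ R i j) (hRrow : ∀ i, ∑ j, R i j = 1)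
    (u : Fin n → ℝ) (hu : ∀ i, 0 ≤ u i) (huR : Matrix.vecMul u R = u) (husum : ∑ i, u i = n)
    (v : Fin n → ℝ) (hv : ∀ i, 0 ≤ v i) (hvsum : ∑ i, v i = n)
    (α : Fin n → ℝ) (hα : ∀ i, 0 ≤ α i)
    (abar : ℝ) (habar₁ : ∀ i, α i ≤ abar) (habar₂ : ∃ i, α i = abar)
    (NR NC : (Fin n → ℝ) → ℝ) (hNR : IsNormOn NR) (hNC : IsNormOn NC)
    (hNR2 : ∀ z, e2 z ≤ NR z)
    (hNRα : ∀ z, NR ((Matrix.diagonal α).mulVec z) ≤ abar * NR z)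
    (δRC : ℝ) (hδRC : 0 ≤ δRC) (hNRC : ∀ z, NR z ≤ δRC * NC z)
    (σR : ℝ) (hσR : σR = inducedNorm NR (R - Matrix.of fun _ j => u j / n))
    (x y : Matrix (Fin n) (Fin p) ℝ)
    (htrack : ∀ c, ∑ i, y i c = ∑ i, gradF G x i c)
    (xbar : Fin p → ℝ) (hxbar : xbar = (n : ℝ)⁻¹ • Matrix.vecMul u x)
    (ybar : Fin p → ℝ) (hybar : ybar = (n : ℝ)⁻¹ • Matrix.vecMul (fun _ => (1 : ℝ)) y)
    (xplus : Matrix (Fin n) (Fin p) ℝ) (hxplus : xplus = R * (x - Matrix.diagonal α * y))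
    (xbarplus : Fin p → ℝ) (hxbarplus : xbarplus = (n : ℝ)⁻¹ • Matrix.vecMul u xplus) :
    colNorm NR (xplus - Matrix.of fun _ c => xbarplus c) ≤
      σR * (1 + abar * NR v * L / Real.sqrt n) *
        colNorm NR (x - Matrix.of fun _ c => xbar c) +
      abar * σR * δRC * colNorm NC (y - Matrix.of fun i c => v i * ybar c) +
      abar * σR * NR v * L * e2 (xbar - (fun c => xstar c)) :=
  push_pull_consensus_error_bound_general hn f G hgrad μ L hμ hμL hlip xstar hmin R hRrow u huR
    husum v α hα abar habar₂ NR NC hNR hNR2 hNRα δRC hδRC hNRC σR hσR x y htrack xbar ybar hybar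
    xplus hxplus xbarplus hxbarplus
end

section
/- Let M ∈ ℝ^{3×3} be nonnegative and irreducible (i.e., for every pair of distinct indices i, j there exist indices i = k₀, k₁, …, k_m = j with M_{k_t k_{t+1}} > 0 for all t), and let λ* > 0 satisfy M_{ii} < λ* for i = 1, 2, 3. Then the spectral radius of M (the maximum modulus of its complex eigenvalues) is strictly less than λ* if and only if det(λ*I − M) > 0. -/
/-!
If every complex eigenvalue of `M` has modulus `< λ*`, the monic real polynomial
`det (t I - M)` has no root on `[λ*, ∞)`, so it is positive at `λ*`.

Conversely put `A = λ* I - M`: its off-diagonal entries are `≤ 0` and its diagonal is positive.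
For such a `3 × 3` matrix, `det A > 0` forces the principal `2 × 2` minors to be positive, which
makes `adj A` entrywise nonnegative. If `M v = μ v` with `‖μ‖ ≥ λ*`, the vector `u = |v|` satisfies
`λ* u ≤ ‖μ‖ u ≤ M u`, i.e. `A u ≤ 0`, hence `det A • u = adj A (A u) ≤ 0` and `v = 0`.
-/

open Matrix Polynomial Filter

theorem Polynomial.Monic.eval_pos_of_forall_ge_not_isRoot {p : ℝ[X]} (hp : p.Monic) {a : ℝ}
    (h : ∀ x, a ≤ x → ¬ p.IsRoot x) : 0 < p.eval a := by
  by_contra! ha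
  by_cases hdeg : p.natDegree = 0
  · rw [hp.natDegree_eq_zero.mp hdeg, eval_one] at ha
    linarith
  have htend : Tendsto p.eval atTop atTop :=
    p.tendsto_atTop_of_leadingCoeff_nonneg
      (natDegree_pos_iff_degree_pos.mp (Nat.pos_of_ne_zero hdeg))
      (by rw [hp.leadingCoeff]; exact zero_le_one)
  obtain ⟨b, hb, hab⟩ := ((htend.eventually_ge_atTop 0).and (eventually_ge_atTop a)).exists
  obtain ⟨x, hx, hx0⟩ := intermediate_value_Icc hab p.continuous.continuousOn ⟨ha, hb⟩
  exact h x hx.1 hx0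

namespace Matrix

variable {n : Type*} [Fintype n]

theorem norm_smul_le_mulVec_norm {M : Matrix n n ℝ} (hM : ∀ i j, 0 ≤ M i j) {μ : ℂ}
    {v : n → ℂ} (hv : M.map (fun t : ℝ => (t : ℂ)) *ᵥ v = μ • v) :
    ‖μ‖ • (fun i => ‖v i‖) ≤ M *ᵥ fun i => ‖v i‖ := by
  intro i
  calc ‖μ‖ * ‖v i‖ = ‖∑ j, (M i j : ℂ) * v j‖ := by
        rw [← norm_mul, ← smul_eq_mul, ← Pi.smul_apply, ← hv]; rfl
    _ ≤ ∑ j, ‖(M i j : ℂ) * v j‖ := norm_sum_le _ _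
    _ = (M *ᵥ fun i => ‖v i‖) i := by
        simp only [norm_mul, Complex.norm_real, Real.norm_of_nonneg (hM i _)]; rfl

variable [DecidableEq n]

theorem exists_mulVec_eq_smul_of_isRoot_charpoly_s12 {K : Type*} [Field K] {M : Matrix n n K}
    {μ : K} (h : M.charpoly.IsRoot μ) : ∃ v ≠ 0, M *ᵥ v = μ • v := by
  rw [IsRoot, eval_charpoly, ← exists_mulVec_eq_zero_iff] at h
  obtain ⟨v, hv, hMv⟩ := h
  refine ⟨v, hv, ?_⟩
  rw [sub_mulVec, scalar_apply, ← smul_one_eq_diagonal, smul_mulVec, one_mulVec,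
    sub_eq_zero] at hMv
  exact hMv.symm

theorem det_smul_one_sub_pos_of_forall_isRoot_charpoly_norm_lt (M : Matrix n n ℝ) (L : ℝ)
    (h : ∀ μ : ℂ, ((M.map (fun t : ℝ => (t : ℂ))).charpoly).IsRoot μ → ‖μ‖ < L) :
    0 < (L • (1 : Matrix n n ℝ) - M).det := by
  rw [smul_one_eq_diagonal, ← scalar_apply, ← eval_charpoly]
  refine M.charpoly_monic.eval_pos_of_forall_ge_not_isRoot fun x hx hroot => ?_
  have hroot' := hroot.map (f := Complex.ofRealHom)
  rw [← charpoly_map] at hroot'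
  have hxL := h x hroot'
  rw [Complex.norm_real, Real.norm_eq_abs] at hxL
  linarith [le_abs_self x]

theorem eq_zero_of_adjugate_nonneg_of_mulVec_nonpos {A : Matrix n n ℝ}
    (hadj : ∀ i j, 0 ≤ A.adjugate i j) (hdet : 0 < A.det) {u : n → ℝ} (hu : 0 ≤ u)
    (hAu : A *ᵥ u ≤ 0) : u = 0 := by
  have hdetu : A.det • u = A.adjugate *ᵥ (A *ᵥ u) := by
    rw [mulVec_mulVec, adjugate_mul, smul_mulVec, one_mulVec]
  have hdetu_nonpos : A.det • u ≤ 0 := by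
    rw [hdetu]
    exact fun i => Finset.sum_nonpos fun j _ => mul_nonpos_of_nonneg_of_nonpos (hadj i j) (hAu j)
  exact le_antisymm ((smul_nonpos_iff_nonpos_of_pos_left hdet).mp hdetu_nonpos) hu

theorem norm_lt_of_isRoot_charpoly_map {M : Matrix n n ℝ} (hM : ∀ i j, 0 ≤ M i j) {L : ℝ}
    (hadj : ∀ i j, 0 ≤ (L • (1 : Matrix n n ℝ) - M).adjugate i j)
    (hdet : 0 < (L • (1 : Matrix n n ℝ) - M).det) {μ : ℂ}
    (hμ : ((M.map (fun t : ℝ => (t : ℂ))).charpoly).IsRoot μ) : ‖μ‖ < L := by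
  by_contra! hLμ
  obtain ⟨v, hv, hMv⟩ := exists_mulVec_eq_smul_of_isRoot_charpoly_s12 hμ
  have hu : 0 ≤ fun i => ‖v i‖ := fun i => norm_nonneg _
  have hLu : L • (fun i => ‖v i‖) ≤ M *ᵥ fun i => ‖v i‖ :=
    (smul_le_smul_of_nonneg_right hLμ hu).trans (norm_smul_le_mulVec_norm hM hMv)
  have hu0 := eq_zero_of_adjugate_nonneg_of_mulVec_nonpos hadj hdet hu
    (by rwa [sub_mulVec, smul_mulVec, one_mulVec, sub_nonpos])
  exact hv (funext fun i => norm_eq_zero.mp (congrFun hu0 i))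

theorem adjugate_fin_three_nonneg {A : Matrix (Fin 3) (Fin 3) ℝ}
    (hoff : ∀ i j, i ≠ j → A i j ≤ 0) (hdiag : ∀ i, 0 < A i i) (hdet : 0 < A.det)
    (i j : Fin 3) : 0 ≤ A.adjugate i j := by
  rw [det_fin_three] at hdet
  have h01 := hoff 0 1 (by decide); have h02 := hoff 0 2 (by decide)
  have h10 := hoff 1 0 (by decide); have h12 := hoff 1 2 (by decide)
  have h20 := hoff 2 0 (by decide); have h21 := hoff 2 1 (by decide)
  have h0 := hdiag 0; have h1 := hdiag 1; have h2 := hdiag 2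
  rw [adjugate_fin_three]
  -- On the diagonal, `A k k` times the principal minor is `det A` plus nonnegative terms.
  fin_cases i <;> fin_cases j <;>
    simp only [of_apply, cons_val', cons_val, cons_val_zero, cons_val_one, cons_val_fin_one,
      Fin.isValue, Fin.mk_one, Fin.zero_eta, Fin.reduceFinMk] <;>
    nlinarith [mul_nonneg_of_nonpos_of_nonpos h01 h10, mul_nonneg_of_nonpos_of_nonpos h02 h20,
      mul_nonneg_of_nonpos_of_nonpos h12 h21, mul_nonneg_of_nonpos_of_nonpos h01 h12,
      mul_nonneg_of_nonpos_of_nonpos h02 h21, mul_nonneg_of_nonpos_of_nonpos h10 h02]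

end Matrix

theorem spectral_radius_lt_iff_det_pos_general
    (M : Matrix (Fin 3) (Fin 3) ℝ)
    (hMnonneg : ∀ i j, 0 ≤ M i j)
    (lamstar : ℝ)
    (hdiag : ∀ i, M i i < lamstar) :
    (∀ lam : ℂ, ((M.map (fun t : ℝ => (t : ℂ))).charpoly).IsRoot lam →
        ‖lam‖ < lamstar) ↔
      0 < (lamstar • (1 : Matrix (Fin 3) (Fin 3) ℝ) - M).det := by
  refine ⟨det_smul_one_sub_pos_of_forall_isRoot_charpoly_norm_lt M lamstar,
    fun hdet lam hlam => norm_lt_of_isRoot_charpoly_map hMnonneg ?_ hdet hlam⟩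
  refine adjugate_fin_three_nonneg (fun i j hij => ?_) (fun i => ?_) hdet
  · simpa [hij] using hMnonneg i j
  · simpa using hdiag i

/-- For a nonnegative irreducible `3×3` matrix `M` with diagonal entries
below `λ* > 0`, the spectral radius of `M` is strictly less than `λ*` iff
`det(λ*I − M) > 0`. -/
theorem spectral_radius_lt_iff_det_pos
    (M : Matrix (Fin 3) (Fin 3) ℝ)
    (hMnonneg : ∀ i j, 0 ≤ M i j)
    (hirr : ∀ i j : Fin 3, i ≠ j → Relation.TransGen (fun a b => 0 < M a b) i j)
    (lamstar : ℝ) (hlam : 0 < lamstar)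
    (hdiag : ∀ i, M i i < lamstar) :
    (∀ lam : ℂ, ((M.map (fun t : ℝ => (t : ℂ))).charpoly).IsRoot lam →
        ‖lam‖ < lamstar) ↔
      0 < (lamstar • (1 : Matrix (Fin 3) (Fin 3) ℝ) - M).det :=
  spectral_radius_lt_iff_det_pos_general M hMnonneg lamstar hdiag
end

section
/- Let T ∈ ℝ^{n×n} be such that I + T is nonnegative with positive diagonal entries, (I + T)𝟙 = 𝟙 (row-stochastic), and the induced digraph of I + T contains a spanning tree. Then 0 is an eigenvalue of T with algebraic multiplicity 1 (as a root of the characteristic polynomial of T over ℂ), and every other complex eigenvalue λ of T satisfies |λ + 1| < 1, i.e., lies strictly inside the unit circle centered at −1 in the complex plane. -/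
/-!
Write `M = 1 + T`, a nonnegative row-stochastic matrix. Suppose `T u = a • 𝟙`. At a maximum
of `u` the average `M u` exceeds `u` by `a`, so `a ≤ 0`, and symmetrically at a minimum, so
`a = 0`. Then `M u = u`, and the maximum principle propagates the maximum (and the minimum) of
`u` back along the edges to a root, so `u` is constant. This gives `ker T = ℂ ∙ 𝟙` and
`ker T² = ker T`, hence the generalized `0`-eigenspace of `T` is a line. For any other
eigenvalue `λ`, Gershgorin's theorem puts `λ + 1` in a disc of center `M k k > 0` and radius
`1 - M k k`; that disc lies in the closed unit disc and meets the unit circle only at `1`.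
-/

open Matrix

theorem Complex.norm_lt_one_of_norm_sub_ofReal_le_one_sub {z : ℂ} {a : ℝ} (ha : 0 < a)
    (hz : ‖z - a‖ ≤ 1 - a) (hz1 : z ≠ 1) : ‖z‖ < 1 := by
  have hsq : (z.re - a) ^ 2 + z.im ^ 2 ≤ (1 - a) ^ 2 := by
    have := pow_le_pow_left₀ (norm_nonneg _) hz 2
    rwa [Complex.sq_norm, normSq_apply, sub_re, sub_im, ofReal_re, ofReal_im, sub_zero, ← sq, ← sq]
      at this
  have hre : z.re < 1 := by
    by_contra! h
    have ha1 : a ≤ 1 := by linarith [norm_nonneg (z - a)]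
    have him : z.im = 0 := by nlinarith
    exact hz1 (ext (by rw [one_re]; nlinarith) him)
  rw [← sq_lt_one_iff₀ (norm_nonneg z), Complex.sq_norm, normSq_apply]
  nlinarith

theorem Module.End.maxGenEigenspace_zero_eq_ker {K V : Type*} [Field K] [AddCommGroup V]
    [Module K V] (f : Module.End K V) (h : LinearMap.ker (f ^ 2) ≤ LinearMap.ker f) :
    f.maxGenEigenspace 0 = LinearMap.ker f := by
  have hstable := Module.End.ker_pow_constant (f := f) (k := 1) (le_antisymm (by
    simpa [sq, Module.End.mul_eq_comp] using LinearMap.ker_le_ker_comp f f) (by simpa using h))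
  ext v
  simp only [mem_maxGenEigenspace, zero_smul, sub_zero]
  constructor
  · rintro ⟨k, hk⟩
    cases k with
    | zero => simp_all
    | succ m =>
      have hk' : v ∈ LinearMap.ker (f ^ (1 + m)) := by rw [add_comm]; exact hk
      simpa [← hstable m] using hk'
  · exact fun hv => ⟨1, by simpa using hv⟩

namespace Matrix

variable {ι : Type*} [Fintype ι]

theorem mulVec_apply_le_of_forall_le {M : Matrix ι ι ℝ} (hnonneg : ∀ i j, 0 ≤ M i j)
    (hrow : ∀ i, ∑ j, M i j = 1) {u : ι → ℝ} {c : ℝ} (hu : ∀ j, u j ≤ c) (i : ι) :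
    (M *ᵥ u) i ≤ c :=
  calc (M *ᵥ u) i = ∑ j, M i j * u j := rfl
    _ ≤ ∑ j, M i j * c :=
      Finset.sum_le_sum fun j _ => mul_le_mul_of_nonneg_left (hu j) (hnonneg i j)
    _ = c := by rw [← Finset.sum_mul, hrow i, one_mul]

theorem eq_of_mulVec_apply_eq_of_forall_le {M : Matrix ι ι ℝ} (hnonneg : ∀ i j, 0 ≤ M i j)
    (hrow : ∀ i, ∑ j, M i j = 1) {u : ι → ℝ} {c : ℝ} (hu : ∀ j, u j ≤ c) {i j : ι}
    (hi : (M *ᵥ u) i = c) (hij : 0 < M i j) : u j = c := by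
  have hle : ∀ k ∈ Finset.univ, M i k * u k ≤ M i k * c := fun k _ =>
    mul_le_mul_of_nonneg_left (hu k) (hnonneg i k)
  have hsum : ∑ k, M i k * u k = ∑ k, M i k * c := by
    rw [← Finset.sum_mul, hrow i, one_mul]; exact hi
  have := (Finset.sum_eq_sum_iff_of_le hle).mp hsum j (Finset.mem_univ j)
  exact mul_left_cancel₀ hij.ne' this

theorem nonpos_of_mulVec_eq_add_const [Nonempty ι] {M : Matrix ι ι ℝ}
    (hnonneg : ∀ i j, 0 ≤ M i j) (hrow : ∀ i, ∑ j, M i j = 1) {u : ι → ℝ} {a : ℝ}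
    (hu : ∀ i, (M *ᵥ u) i = u i + a) : a ≤ 0 := by
  obtain ⟨i, hi⟩ := Finite.exists_max u
  have := mulVec_apply_le_of_forall_le hnonneg hrow hi i
  linarith [hu i]

theorem eq_zero_of_mulVec_eq_add_const [Nonempty ι] {M : Matrix ι ι ℝ}
    (hnonneg : ∀ i j, 0 ≤ M i j) (hrow : ∀ i, ∑ j, M i j = 1) {u : ι → ℝ} {a : ℝ}
    (hu : ∀ i, (M *ᵥ u) i = u i + a) : a = 0 := by
  have hneg : ∀ i, (M *ᵥ -u) i = (-u) i + -a := fun i => by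
    rw [mulVec_neg, Pi.neg_apply, hu, Pi.neg_apply, neg_add]
  linarith [nonpos_of_mulVec_eq_add_const hnonneg hrow hu,
    nonpos_of_mulVec_eq_add_const hnonneg hrow hneg]

theorem le_apply_root_of_mulVec_eq_self {M : Matrix ι ι ℝ} (hnonneg : ∀ i j, 0 ≤ M i j)
    (hrow : ∀ i, ∑ j, M i j = 1) {r : ι}
    (hroot : ∀ i, Relation.ReflTransGen (fun a b => 0 < M b a) r i) {u : ι → ℝ}
    (hu : M *ᵥ u = u) (i : ι) : u i ≤ u r := by
  have : Nonempty ι := ⟨r⟩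
  obtain ⟨m, hm⟩ := Finite.exists_max u
  have hback : ∀ a, Relation.ReflTransGen (fun a b => 0 < M b a) a m → u a = u m := by
    intro a ha
    induction ha using Relation.ReflTransGen.head_induction_on with
    | refl => rfl
    | head hedge _ ih =>
      exact eq_of_mulVec_apply_eq_of_forall_le hnonneg hrow hm (by rw [hu, ih]) hedge
  exact hback r (hroot m) ▸ hm i

theorem eq_apply_root_of_mulVec_eq_self {M : Matrix ι ι ℝ} (hnonneg : ∀ i j, 0 ≤ M i j)
    (hrow : ∀ i, ∑ j, M i j = 1) {r : ι}
    (hroot : ∀ i, Relation.ReflTransGen (fun a b => 0 < M b a) r i) {u : ι → ℝ}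
    (hu : M *ᵥ u = u) (i : ι) : u i = u r := by
  have hneg : M *ᵥ -u = -u := by rw [mulVec_neg, hu]
  have := le_apply_root_of_mulVec_eq_self hnonneg hrow hroot hneg i
  simp only [Pi.neg_apply, neg_le_neg_iff] at this
  exact le_antisymm (le_apply_root_of_mulVec_eq_self hnonneg hrow hroot hu i) this

theorem re_mulVec_map_ofReal (T : Matrix ι ι ℝ) (v : ι → ℂ) (i : ι) :
    (((T.map ((↑) : ℝ → ℂ)) *ᵥ v) i).re = (T *ᵥ fun j => (v j).re) i := by
  simp only [mulVec, dotProduct, map_apply, Complex.re_sum, Complex.re_ofReal_mul]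

theorem im_mulVec_map_ofReal (T : Matrix ι ι ℝ) (v : ι → ℂ) (i : ι) :
    (((T.map ((↑) : ℝ → ℂ)) *ᵥ v) i).im = (T *ᵥ fun j => (v j).im) i := by
  simp only [mulVec, dotProduct, map_apply, Complex.im_sum, Complex.im_ofReal_mul]

variable [DecidableEq ι]

theorem eq_zero_and_eq_apply_root_of_mulVec_eq_const {T : Matrix ι ι ℝ}
    (hnonneg : ∀ i j, 0 ≤ (1 + T) i j) (hrow : ∀ i, ∑ j, (1 + T) i j = 1) {r : ι}
    (hroot : ∀ i, Relation.ReflTransGen (fun a b => 0 < (1 + T) b a) r i) {u : ι → ℝ}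
    {a : ℝ} (hu : T *ᵥ u = fun _ => a) : a = 0 ∧ ∀ i, u i = u r := by
  have : Nonempty ι := ⟨r⟩
  have hshift : ∀ i, ((1 + T) *ᵥ u) i = u i + a := fun i => by
    rw [add_mulVec, one_mulVec, hu, Pi.add_apply]
  have ha : a = 0 := eq_zero_of_mulVec_eq_add_const hnonneg hrow hshift
  refine ⟨ha, eq_apply_root_of_mulVec_eq_self hnonneg hrow hroot ?_⟩
  rw [add_mulVec, one_mulVec, hu, ha]
  exact add_zero u

theorem eq_zero_and_eq_apply_root_of_complex_mulVec_eq_const {T : Matrix ι ι ℝ}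
    (hnonneg : ∀ i j, 0 ≤ (1 + T) i j) (hrow : ∀ i, ∑ j, (1 + T) i j = 1) {r : ι}
    (hroot : ∀ i, Relation.ReflTransGen (fun a b => 0 < (1 + T) b a) r i) {v : ι → ℂ}
    {c : ℂ} (hv : T.map ((↑) : ℝ → ℂ) *ᵥ v = fun _ => c) : c = 0 ∧ ∀ i, v i = v r := by
  obtain ⟨hre, hre'⟩ := eq_zero_and_eq_apply_root_of_mulVec_eq_const hnonneg hrow hroot
    (u := fun j => (v j).re) (a := c.re) (funext fun i => by rw [← re_mulVec_map_ofReal, hv])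
  obtain ⟨him, him'⟩ := eq_zero_and_eq_apply_root_of_mulVec_eq_const hnonneg hrow hroot
    (u := fun j => (v j).im) (a := c.im) (funext fun i => by rw [← im_mulVec_map_ofReal, hv])
  exact ⟨Complex.ext hre him, fun i => Complex.ext (hre' i) (him' i)⟩

theorem ker_toLin'_map_ofReal_eq_span_one {T : Matrix ι ι ℝ}
    (hnonneg : ∀ i j, 0 ≤ (1 + T) i j) (hrow : ∀ i, ∑ j, (1 + T) i j = 1) {r : ι}
    (hroot : ∀ i, Relation.ReflTransGen (fun a b => 0 < (1 + T) b a) r i) :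
    LinearMap.ker (toLin' (T.map ((↑) : ℝ → ℂ))) = ℂ ∙ fun _ => 1 := by
  apply le_antisymm
  · intro v hv
    have hconst := (eq_zero_and_eq_apply_root_of_complex_mulVec_eq_const hnonneg hrow hroot
      (c := 0) (by simpa [funext_iff] using hv)).2
    exact Submodule.mem_span_singleton.mpr ⟨v r, funext fun i => by simp [hconst i]⟩
  · have hrowT : ∀ i, ∑ j, T i j = 0 := fun i => by
      simpa [add_apply, Finset.sum_add_distrib, one_apply] using hrow i
    rw [Submodule.span_singleton_le_iff_mem, LinearMap.mem_ker, toLin'_apply]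
    ext i
    simp [mulVec, dotProduct, ← Complex.ofReal_sum, hrowT i]

theorem ker_toLin'_map_ofReal_sq_le_ker {T : Matrix ι ι ℝ}
    (hnonneg : ∀ i j, 0 ≤ (1 + T) i j) (hrow : ∀ i, ∑ j, (1 + T) i j = 1) {r : ι}
    (hroot : ∀ i, Relation.ReflTransGen (fun a b => 0 < (1 + T) b a) r i) :
    LinearMap.ker (toLin' (T.map ((↑) : ℝ → ℂ)) ^ 2) ≤
      LinearMap.ker (toLin' (T.map ((↑) : ℝ → ℂ))) := by
  set A := T.map ((↑) : ℝ → ℂ)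
  intro v hv
  replace hv : A *ᵥ (A *ᵥ v) = fun _ => 0 := by
    simpa [sq, funext_iff] using hv
  have hAv : A *ᵥ v = fun _ => (A *ᵥ v) r :=
    funext (eq_zero_and_eq_apply_root_of_complex_mulVec_eq_const hnonneg hrow hroot hv).2
  have hc := (eq_zero_and_eq_apply_root_of_complex_mulVec_eq_const hnonneg hrow hroot hAv).1
  rw [LinearMap.mem_ker, toLin'_apply, hAv, hc]
  rfl

theorem norm_add_one_lt_one_of_hasEigenvalue {T : Matrix ι ι ℝ}
    (hnonneg : ∀ i j, 0 ≤ (1 + T) i j) (hdiag : ∀ i, 0 < (1 + T) i i)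
    (hrow : ∀ i, ∑ j, (1 + T) i j = 1) {lam : ℂ}
    (hlam : Module.End.HasEigenvalue (toLin' (T.map ((↑) : ℝ → ℂ))) lam) (hne : lam ≠ 0) :
    ‖lam + 1‖ < 1 := by
  obtain ⟨k, hk⟩ := eigenvalue_mem_ball hlam
  rw [Metric.mem_closedBall, dist_eq_norm] at hk
  have hradius :
      ∑ j ∈ Finset.univ.erase k, ‖(T.map ((↑) : ℝ → ℂ)) k j‖ = 1 - (1 + T) k k := by
    rw [← hrow k, ← Finset.sum_erase_add _ _ (Finset.mem_univ k), add_sub_cancel_right]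
    refine Finset.sum_congr rfl fun j hj => ?_
    have hoff : (1 + T) k j = T k j := by simp [one_apply_ne' (Finset.ne_of_mem_erase hj)]
    rw [map_apply, Complex.norm_real, Real.norm_eq_abs, ← hoff, abs_of_nonneg (hnonneg k j)]
  have hcenter : lam - (T.map ((↑) : ℝ → ℂ)) k k = lam + 1 - ((1 + T) k k : ℝ) := by
    simp; ring
  rw [hradius, hcenter] at hk
  exact Complex.norm_lt_one_of_norm_sub_ofReal_le_one_sub (hdiag k) hk
    (fun h => hne (by linear_combination h))

end Matrix

/-- If `I + T` is nonnegative row-stochastic with positive diagonal and its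
induced digraph contains a spanning tree, then `0` is an eigenvalue of `T` of algebraic
multiplicity `1`, and every other complex eigenvalue `λ` of `T` satisfies `|λ + 1| < 1`. -/
theorem eigenvalues_of_T {n : ℕ}
    (T : Matrix (Fin n) (Fin n) ℝ)
    (hnonneg : ∀ i j, 0 ≤ (1 + T) i j)
    (hdiag : ∀ i, 0 < (1 + T) i i)
    (hrow : ∀ i, ∑ j, (1 + T) i j = 1)
    (htree : (rootSet (1 + T)).Nonempty) :
    (((T.map (fun t : ℝ => (t : ℂ))).charpoly).rootMultiplicity 0 = 1) ∧
    (∀ lam : ℂ, ((T.map (fun t : ℝ => (t : ℂ))).charpoly).IsRoot lam → lam ≠ 0 →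
      ‖lam + 1‖ < 1) := by
  obtain ⟨r, hroot⟩ := htree
  refine ⟨?_, fun lam hlam hne => ?_⟩
  · rw [← charpoly_toLin', ← LinearMap.finrank_maxGenEigenspace_eq,
      Module.End.maxGenEigenspace_zero_eq_ker _
        (ker_toLin'_map_ofReal_sq_le_ker hnonneg hrow hroot),
      ker_toLin'_map_ofReal_eq_span_one hnonneg hrow hroot]
    exact finrank_span_singleton (Function.ne_iff.mpr ⟨r, one_ne_zero⟩)
  · rw [← charpoly_toLin', ← Module.End.hasEigenvalue_iff_isRoot_charpoly] at hlam
    exact norm_add_one_lt_one_of_hasEigenvalue hnonneg hdiag hrow hlam hne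
end

section
/- Let Ω be a finite set with probability weights w : Ω → [0,1], ∑_{ω} w(ω) = 1. Let R : Ω → ℝ^{n×n} satisfy R(ω)𝟙 = 𝟙 for every ω, let R̄ := ∑_{ω} w(ω) R(ω), and let ū ∈ ℝⁿ satisfy ūᵀR̄ = ūᵀ and ūᵀ𝟙 = n. Then for any matrix S ∈ ℝ^{n×n} and any x ∈ ℝⁿ, writing x̄ := ūᵀx/n, the following exact bias–variance decomposition holds: ∑_{ω} w(ω)·‖S(I − 𝟙ūᵀ/n)R(ω)x‖₂² = ‖S(R̄ − 𝟙ūᵀ/n)(x − x̄𝟙)‖₂² + ∑_{ω} w(ω)·‖S(I − 𝟙ūᵀ/n)(R(ω) − R̄)(x − x̄𝟙)‖₂². -/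
/-!
With `J := 𝟙ūᵀ/n` we have `J𝟙 = 𝟙` and `J R̄ = J`, so `S(I − J)R(ω)` kills `𝟙` and splits as
`S(R̄ − J) + S(I − J)(R(ω) − R̄)`. Applied to `x − x̄𝟙` this writes the random vector as a fixed
vector plus a fluctuation whose `w`-mean is `0`, and the cross term of the expanded square
vanishes in expectation.
-/

open Matrix

/-- Squared Euclidean norm on `ℝⁿ`. -/
def e2sq {n : ℕ} (z : Fin n → ℝ) : ℝ := ∑ i, z i ^ 2

theorem sum_mul_norm_add_sq_of_sum_smul_eq_zero {Ω E : Type*} [Fintype Ω]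
    [NormedAddCommGroup E] [InnerProductSpace ℝ E] {w : Ω → ℝ} (hw : ∑ ω, w ω = 1)
    (a : E) {b : Ω → E} (hb : ∑ ω, w ω • b ω = 0) :
    ∑ ω, w ω * ‖a + b ω‖ ^ 2 = ‖a‖ ^ 2 + ∑ ω, w ω * ‖b ω‖ ^ 2 := by
  have hcross : ∑ ω, w ω * (2 * inner ℝ a (b ω)) = 0 :=
    calc ∑ ω, w ω * (2 * inner ℝ a (b ω)) = 2 * inner ℝ a (∑ ω, w ω • b ω) := by
          simp only [inner_sum, real_inner_smul_right, Finset.mul_sum]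
          ring_nf
      _ = 0 := by rw [hb, inner_zero_right, mul_zero]
  simp_rw [norm_add_sq_real, mul_add, Finset.sum_add_distrib, hcross, ← Finset.sum_mul, hw]
  ring

theorem e2sq_eq_norm_sq {n : ℕ} (z : Fin n → ℝ) : e2sq z = ‖WithLp.toLp 2 z‖ ^ 2 := by
  simp [e2sq, EuclideanSpace.real_norm_sq_eq]

theorem sum_mul_e2sq_add_of_sum_smul_eq_zero {Ω : Type*} [Fintype Ω] {n : ℕ}
    {w : Ω → ℝ} (hw : ∑ ω, w ω = 1) (a : Fin n → ℝ) {b : Ω → Fin n → ℝ}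
    (hb : ∑ ω, w ω • b ω = 0) :
    ∑ ω, w ω * e2sq (a + b ω) = e2sq a + ∑ ω, w ω * e2sq (b ω) := by
  simp only [e2sq_eq_norm_sq, WithLp.toLp_add]
  refine sum_mul_norm_add_sq_of_sum_smul_eq_zero hw _ ?_
  simpa [← WithLp.toLp_smul, ← WithLp.toLp_sum] using congrArg (WithLp.toLp 2) hb

theorem sum_smul_sub_sum_smul {Ω E : Type*} [Fintype Ω] [AddCommGroup E] [Module ℝ E]
    {w : Ω → ℝ} (hw : ∑ ω, w ω = 1) (X : Ω → E) :
    ∑ ω, w ω • (X ω - ∑ ω', w ω' • X ω') = 0 := by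
  simp [smul_sub, Finset.sum_sub_distrib, ← Finset.sum_smul, hw]

theorem of_div_mul_eq_of_vecMul_eq {m k : Type*} [Fintype k] (u : k → ℝ) (c : ℝ)
    (M : Matrix k k ℝ) (hu : vecMul u M = u) :
    (of fun (_ : m) j => u j / c) * M = of fun _ j => u j / c := by
  ext i j
  simp only [mul_apply, of_apply, div_mul_eq_mul_div, ← Finset.sum_div]
  rw [← dotProduct]
  exact congrArg (· / c) (congrFun hu j)

theorem of_div_mulVec_one {n : ℕ} (u : Fin n → ℝ) (hu : ∑ i, u i = n) :
    (of fun (_ : Fin n) j => u j / n) *ᵥ (fun _ => 1) = fun _ => 1 := by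
  funext i
  have hn : (n : ℝ) ≠ 0 := Nat.cast_ne_zero.mpr i.pos.ne'
  simp only [mulVec, dotProduct, of_apply, mul_one, ← Finset.sum_div, hu, div_self hn]

theorem mulVec_sub_const_of_mulVec_one_eq_zero {m k : Type*} [Fintype k]
    (M : Matrix m k ℝ) (hM : M *ᵥ (fun _ => 1) = 0) (x : k → ℝ) (c : ℝ) :
    M *ᵥ (fun i => x i - c) = M *ᵥ x := by
  have hx : (fun i => x i - c) = x - c • fun _ => 1 := by
    funext i
    simp
  rw [hx, mulVec_sub, mulVec_smul, hM, smul_zero, sub_zero]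

theorem bias_variance_row_stochastic_general {n : ℕ}
    {Ω : Type*} [Fintype Ω]
    (w : Ω → ℝ) (hwsum : ∑ ω, w ω = 1)
    (R : Ω → Matrix (Fin n) (Fin n) ℝ)
    (hR : ∀ ω, (R ω).mulVec (fun _ => (1 : ℝ)) = fun _ => (1 : ℝ))
    (Rbar : Matrix (Fin n) (Fin n) ℝ) (hRbar : Rbar = ∑ ω, w ω • R ω)
    (ubar : Fin n → ℝ) (hubar : Matrix.vecMul ubar Rbar = ubar) (husum : ∑ i, ubar i = n)
    (S : Matrix (Fin n) (Fin n) ℝ) (x : Fin n → ℝ)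
    (xbar : ℝ) :
    ∑ ω, w ω * e2sq ((S * (1 - Matrix.of fun _ j => ubar j / n) * R ω).mulVec x) =
      e2sq ((S * (Rbar - Matrix.of fun _ j => ubar j / n)).mulVec (fun i => x i - xbar)) +
      ∑ ω, w ω * e2sq ((S * (1 - Matrix.of fun _ j => ubar j / n) * (R ω - Rbar)).mulVec
        (fun i => x i - xbar)) := by
  set J : Matrix (Fin n) (Fin n) ℝ := of fun _ j => ubar j / n
  have hJR : J * Rbar = J := of_div_mul_eq_of_vecMul_eq ubar n Rbar hubar
  have hkill (ω : Ω) : (S * (1 - J) * R ω) *ᵥ (fun _ => 1) = 0 := by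
    rw [← mulVec_mulVec, hR, ← mulVec_mulVec, sub_mulVec, one_mulVec,
      of_div_mulVec_one ubar husum, sub_self, mulVec_zero]
  have hsplit (ω : Ω) : (S * (1 - J) * R ω) *ᵥ x = (S * (Rbar - J)) *ᵥ (fun i => x i - xbar) +
      (S * (1 - J) * (R ω - Rbar)) *ᵥ (fun i => x i - xbar) := by
    rw [← mulVec_sub_const_of_mulVec_one_eq_zero _ (hkill ω) x xbar, ← add_mulVec,
      mul_sub (S * (1 - J)), mul_assoc S (1 - J) Rbar, sub_mul, one_mul, hJR]
    abel_nf
  have hmean : ∑ ω, w ω • (S * (1 - J) * (R ω - Rbar)) *ᵥ (fun i => x i - xbar) = 0 := by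
    simp_rw [← smul_mulVec, ← sum_mulVec, ← mul_smul_comm, ← Finset.mul_sum, hRbar,
      sum_smul_sub_sum_smul hwsum, mul_zero, zero_mulVec]
  simp only [hsplit]
  exact sum_mul_e2sq_add_of_sum_smul_eq_zero hwsum _ hmean

/-- Exact bias–variance decomposition for the row-stochastic random
mixing step: `E‖S(I − 𝟙ūᵀ/n)R(ω)x‖₂² = ‖S(R̄ − 𝟙ūᵀ/n)(x − x̄𝟙)‖₂²
+ E‖S(I − 𝟙ūᵀ/n)(R(ω) − R̄)(x − x̄𝟙)‖₂²`. -/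
theorem bias_variance_row_stochastic {n : ℕ}
    {Ω : Type*} [Fintype Ω]
    (w : Ω → ℝ) (hw0 : ∀ ω, 0 ≤ w ω) (hw1 : ∀ ω, w ω ≤ 1) (hwsum : ∑ ω, w ω = 1)
    (R : Ω → Matrix (Fin n) (Fin n) ℝ)
    (hR : ∀ ω, (R ω).mulVec (fun _ => (1 : ℝ)) = fun _ => (1 : ℝ))
    (Rbar : Matrix (Fin n) (Fin n) ℝ) (hRbar : Rbar = ∑ ω, w ω • R ω)
    (ubar : Fin n → ℝ) (hubar : Matrix.vecMul ubar Rbar = ubar) (husum : ∑ i, ubar i = n)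
    (S : Matrix (Fin n) (Fin n) ℝ) (x : Fin n → ℝ)
    (xbar : ℝ) (hxbar : xbar = (∑ i, ubar i * x i) / n) :
    ∑ ω, w ω * e2sq ((S * (1 - Matrix.of fun _ j => ubar j / n) * R ω).mulVec x) =
      e2sq ((S * (Rbar - Matrix.of fun _ j => ubar j / n)).mulVec (fun i => x i - xbar)) +
      ∑ ω, w ω * e2sq ((S * (1 - Matrix.of fun _ j => ubar j / n) * (R ω - Rbar)).mulVec
        (fun i => x i - xbar)) :=
  bias_variance_row_stochastic_general w hwsum R hR Rbar hRbar ubar hubar husum S x xbar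
end
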